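/- arXiv:math/9804131 — 6 statements merged into one kernel-verified Lean document; each statement's English description precedes it below -/
import Mathlib

section
/- Assume q^{2l} = 1 where l ≥ 2 is the smallest positive integer with this property. Then the elements X₊^l, X₋^l and (C − λX₀)^l are central in B. -/
/-!
Put `Y = C - λX₀`. The relations give `Y X₊ = q⁻² X₊ Y` and `Y X₋ = q² X₋ Y`, and `C` is central,
so `q^{2l} = 1` makes `Y` commute with `X₊^l`, `X₋^l` and `Y^l` with `X₊`, `X₋`; then
`X₀ = λ⁻¹ (C - Y)` commutes with `X₊^l` and `X₋^l` as well. For `X₊^l X₋ - X₋ X₊^l`, expand it as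
`∑ᵢ X₊^(l-1-i) [X₊, X₋] X₊^i` with `[X₊, X₋] = (q + q⁻¹) λ⁻¹ Y (C - Y)`: the `q`-commutation
collapses the sum into the geometric sums `∑_{i<l} tⁱ` and `(1 + t) ∑_{i<l} t²ⁱ = ∑_{j<2l} tʲ`
with `t = q⁻²`, which vanish because `tˡ = 1 ≠ t` (symmetrically for `X₋^l`, with `t = q²`).
-/

noncomputable section

namespace SL2q

/-- The free algebra on the four generators X₀, X₊, X₋, C. -/
abbrev Free := FreeAlgebra ℂ (Fin 4)

def gX0 : Free := FreeAlgebra.ι ℂ 0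
def gXp : Free := FreeAlgebra.ι ℂ 1
def gXm : Free := FreeAlgebra.ι ℂ 2
def gC  : Free := FreeAlgebra.ι ℂ 3

/-- The defining relations of the algebra B of Lyubashenko–Sudbery. -/
inductive Rel (q : ℂ) : Free → Free → Prop
  | r1  : Rel q ((q ^ 2) • (gX0 * gXp) - gXp * gX0) (q • (gC * gXp))
  | r2  : Rel q ((q⁻¹ ^ 2) • (gX0 * gXm) - gXm * gX0) (-(q⁻¹ • (gC * gXm)))
  | r3  : Rel q (gXp * gXm - gXm * gXp)
      ((q + q⁻¹) • ((gC - (q - q⁻¹) • gX0) * gX0))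
  | rc0 : Rel q (gC * gX0) (gX0 * gC)
  | rcp : Rel q (gC * gXp) (gXp * gC)
  | rcm : Rel q (gC * gXm) (gXm * gC)

/-- The algebra B, presented by generators and relations. -/
abbrev B (q : ℂ) := RingQuot (Rel q)

def X0 (q : ℂ) : B q := RingQuot.mkAlgHom ℂ (Rel q) gX0
def Xp (q : ℂ) : B q := RingQuot.mkAlgHom ℂ (Rel q) gXp
def Xm (q : ℂ) : B q := RingQuot.mkAlgHom ℂ (Rel q) gXm
def Cc (q : ℂ) : B q := RingQuot.mkAlgHom ℂ (Rel q) gC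

/-- C'₂ = X₋X₊ + q⁻¹ C X₀ + q⁻² X₀². -/
def C2 (q : ℂ) : B q :=
  Xm q * Xp q + q⁻¹ • (Cc q * X0 q) + (q⁻¹ ^ 2) • (X0 q) ^ 2

end SL2q

open Finset

section QCommute

variable {R A : Type*} [CommRing R] [Ring A] [Algebra R A]

theorem mul_pow_eq_smul_of_mul_eq_smul {d e : A} {s : R} (h : d * e = s • (e * d)) (n : ℕ) :
    d * e ^ n = s ^ n • (e ^ n * d) := by
  induction n with
  | zero => simp
  | succ n ih =>
    rw [pow_succ, ← mul_assoc, ih, smul_mul_assoc, mul_assoc, h, mul_smul_comm, smul_smul,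
      ← mul_assoc, ← pow_succ, pow_succ]

theorem pow_mul_eq_smul_of_mul_eq_smul {d e : A} {s : R} (h : d * e = s • (e * d)) (n : ℕ) :
    d ^ n * e = s ^ n • (e * d ^ n) := by
  induction n with
  | zero => simp
  | succ n ih =>
    rw [pow_succ, mul_assoc, h, mul_smul_comm, ← mul_assoc, ih, smul_mul_assoc, smul_smul,
      mul_assoc, ← pow_succ, ← pow_succ']

theorem pow_mul_sub_mul_pow (e f : A) (n : ℕ) :
    e ^ n * f - f * e ^ n = ∑ i ∈ range n, e ^ (n - 1 - i) * (e * f - f * e) * e ^ i := by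
  induction n with
  | zero => simp
  | succ n ih =>
    have hsplit : e ^ (n + 1) * f - f * e ^ (n + 1)
        = (e ^ n * f - f * e ^ n) * e + e ^ n * (e * f - f * e) := by
      rw [pow_succ]; noncomm_ring
    rw [hsplit, ih, sum_mul, sum_range_succ']
    congr 1
    · refine sum_congr rfl fun i _ => ?_
      rw [mul_assoc, ← pow_succ, Nat.add_sub_cancel, Nat.sub_sub, Nat.add_comm 1 i]
    · simp

theorem sum_pow_mul_mul_pow_of_mul_eq_smul {d e : A} {s : R} (h : d * e = s • (e * d)) (n : ℕ) :
    ∑ i ∈ range n, e ^ (n - 1 - i) * d * e ^ i = (∑ i ∈ range n, s ^ i) • (e ^ (n - 1) * d) := by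
  rw [sum_smul]
  refine sum_congr rfl fun i hi => ?_
  rw [mul_assoc, mul_pow_eq_smul_of_mul_eq_smul h, mul_smul_comm, ← mul_assoc,
    pow_sub_mul_pow _ (by simp at hi; omega)]

theorem commute_pow_right_of_mul_eq_smul {d e : A} {s : R} {n : ℕ} (h : d * e = s • (e * d))
    (hs : s ^ n = 1) : Commute d (e ^ n) := by
  rw [Commute, SemiconjBy, mul_pow_eq_smul_of_mul_eq_smul h, hs, one_smul]

theorem commute_pow_left_of_mul_eq_smul {d e : A} {s : R} {n : ℕ} (h : d * e = s • (e * d))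
    (hs : s ^ n = 1) : Commute (d ^ n) e := by
  rw [Commute, SemiconjBy, pow_mul_eq_smul_of_mul_eq_smul h, hs, one_smul]

end QCommute

section GeomSum

variable {R : Type*} [CommRing R] [IsDomain R] {t : R} {n : ℕ}

theorem geom_sum_eq_zero_of_pow_eq_one (ht : t ≠ 1) (htn : t ^ n = 1) :
    ∑ i ∈ range n, t ^ i = 0 := by
  have h := geom_sum_mul t n
  rw [htn, sub_self] at h
  exact (mul_eq_zero.mp h).resolve_right (sub_ne_zero.mpr ht)

theorem one_add_mul_geom_sum_sq_eq_zero (ht : t ≠ 1) (htn : t ^ n = 1) :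
    (1 + t) * ∑ i ∈ range n, (t ^ 2) ^ i = 0 := by
  have h := geom_sum_mul (t ^ 2) n
  rw [← pow_mul, mul_comm 2 n, pow_mul, htn, one_pow, sub_self] at h
  have : (t - 1) * ((1 + t) * ∑ i ∈ range n, (t ^ 2) ^ i) = 0 := by linear_combination h
  exact (mul_eq_zero.mp this).resolve_left (sub_ne_zero.mpr ht)

end GeomSum

theorem commute_pow_of_mul_sub_mul_eq_smul {K A : Type*} [CommRing K] [IsDomain K] [Ring A]
    [Algebra K A] {e f y c : A} {t r : K} {n : ℕ} (hce : Commute c e)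
    (hye : y * e = t • (e * y)) (hef : e * f - f * e = ((1 + t) * r) • (y * (c - y)))
    (ht : t ≠ 1) (htn : t ^ n = 1) : Commute (e ^ n) f := by
  have hyc : y * c * e = t • (e * (y * c)) := by
    rw [mul_assoc, hce.eq, ← mul_assoc, hye, smul_mul_assoc, mul_assoc]
  have hyy : y ^ 2 * e = t ^ 2 • (e * y ^ 2) := pow_mul_eq_smul_of_mul_eq_smul hye 2
  refine sub_eq_zero.mp ?_
  calc e ^ n * f - f * e ^ n
      = ∑ i ∈ range n, e ^ (n - 1 - i) * (((1 + t) * r) • (y * c - y ^ 2)) * e ^ i := by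
        rw [pow_mul_sub_mul_pow, hef, mul_sub, ← sq]
    _ = ((1 + t) * r) • (∑ i ∈ range n, e ^ (n - 1 - i) * (y * c) * e ^ i
          - ∑ i ∈ range n, e ^ (n - 1 - i) * y ^ 2 * e ^ i) := by
        rw [← sum_sub_distrib, smul_sum]
        simp only [mul_smul_comm, smul_mul_assoc, mul_sub, sub_mul, smul_sub]
    _ = ((1 + t) * r) • ((∑ i ∈ range n, t ^ i) • (e ^ (n - 1) * (y * c))
          - (∑ i ∈ range n, (t ^ 2) ^ i) • (e ^ (n - 1) * y ^ 2)) := by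
        rw [sum_pow_mul_mul_pow_of_mul_eq_smul hyc, sum_pow_mul_mul_pow_of_mul_eq_smul hyy]
    _ = 0 := by
        rw [geom_sum_eq_zero_of_pow_eq_one ht htn, zero_smul, zero_sub, smul_neg, smul_smul,
          mul_right_comm _ r, one_add_mul_geom_sum_sq_eq_zero ht htn, zero_mul, zero_smul, neg_zero]

namespace SL2q

variable (q : ℂ)

def Y : B q := Cc q - (q - q⁻¹) • X0 q

theorem rel_X0_Xp : q ^ 2 • (X0 q * Xp q) - Xp q * X0 q = q • (Cc q * Xp q) := by
  simpa [X0, Xp, Cc] using RingQuot.mkAlgHom_rel ℂ (Rel.r1 (q := q))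

theorem rel_X0_Xm : q⁻¹ ^ 2 • (X0 q * Xm q) - Xm q * X0 q = -(q⁻¹ • (Cc q * Xm q)) := by
  simpa [X0, Xm, Cc] using RingQuot.mkAlgHom_rel ℂ (Rel.r2 (q := q))

theorem rel_Xp_Xm : Xp q * Xm q - Xm q * Xp q = (q + q⁻¹) • (Y q * X0 q) := by
  simpa [Y, X0, Xp, Xm, Cc] using RingQuot.mkAlgHom_rel ℂ (Rel.r3 (q := q))

theorem commute_Cc_X0 : Commute (Cc q) (X0 q) := by
  simpa [Commute, SemiconjBy, X0, Cc] using RingQuot.mkAlgHom_rel ℂ (Rel.rc0 (q := q))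

theorem commute_Cc_Xp : Commute (Cc q) (Xp q) := by
  simpa [Commute, SemiconjBy, Xp, Cc] using RingQuot.mkAlgHom_rel ℂ (Rel.rcp (q := q))

theorem commute_Cc_Xm : Commute (Cc q) (Xm q) := by
  simpa [Commute, SemiconjBy, Xm, Cc] using RingQuot.mkAlgHom_rel ℂ (Rel.rcm (q := q))

theorem commute_Cc_Y : Commute (Cc q) (Y q) :=
  (Commute.refl _).sub_right ((commute_Cc_X0 q).smul_right _)

theorem commute_X0_Y : Commute (X0 q) (Y q) :=
  (commute_Cc_X0 q).symm.sub_right ((Commute.refl _).smul_right _)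

theorem mem_center_of_commute (z : B q) (h0 : Commute (X0 q) z) (hp : Commute (Xp q) z)
    (hm : Commute (Xm q) z) (hc : Commute (Cc q) z) : z ∈ Subalgebra.center ℂ (B q) := by
  rw [Subalgebra.mem_center_iff]
  intro b
  obtain ⟨a, rfl⟩ := RingQuot.mkAlgHom_surjective ℂ (Rel q) b
  induction a using FreeAlgebra.induction with
  | grade0 r => rw [AlgHom.commutes]; exact Algebra.commutes r z
  | grade1 i =>
    fin_cases i
    · exact h0.eq
    · exact hp.eq
    · exact hm.eq
    · exact hc.eq
  | mul a b iha ihb => rw [map_mul, mul_assoc, ihb, ← mul_assoc, iha, mul_assoc]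
  | add a b iha ihb => rw [map_add, add_mul, iha, ihb, mul_add]

variable {q}

theorem sub_inv_ne_zero (hq : q ≠ 0) (hq2 : q ^ 2 ≠ 1) : q - q⁻¹ ≠ 0 := by
  refine sub_ne_zero.mpr fun h => hq2 ?_
  rw [sq]
  nth_rw 2 [h]
  exact mul_inv_cancel₀ hq

theorem commute_X0_of_commute_Cc_of_commute_Y (hq : q ≠ 0) (hq2 : q ^ 2 ≠ 1) {z : B q}
    (hC : Commute (Cc q) z) (hY : Commute (Y q) z) : Commute (X0 q) z := by
  have hX0 : X0 q = (q - q⁻¹)⁻¹ • (Cc q - Y q) := by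
    rw [Y, sub_sub_cancel, inv_smul_smul₀ (sub_inv_ne_zero hq hq2)]
  rw [hX0]
  exact (hC.sub_left hY).smul_left _

theorem Y_mul_Xp (hq : q ≠ 0) : Y q * Xp q = (q ^ 2)⁻¹ • (Xp q * Y q) := by
  have h : X0 q * Xp q = (q ^ 2)⁻¹ • (Xp q * X0 q + q • (Xp q * Cc q)) := by
    rw [← (commute_Cc_Xp q).eq, ← sub_eq_iff_eq_add'.mp (rel_X0_Xp q),
      inv_smul_smul₀ (pow_ne_zero 2 hq)]
  rw [Y, sub_mul, smul_mul_assoc, h, mul_sub, mul_smul_comm, (commute_Cc_Xp q).eq]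
  match_scalars
  · field_simp; ring
  · field_simp

theorem Y_mul_Xm (hq : q ≠ 0) : Y q * Xm q = q ^ 2 • (Xm q * Y q) := by
  have h : X0 q * Xm q = (q⁻¹ ^ 2)⁻¹ • (Xm q * X0 q + -(q⁻¹ • (Xm q * Cc q))) := by
    rw [← (commute_Cc_Xm q).eq, ← sub_eq_iff_eq_add'.mp (rel_X0_Xm q),
      inv_smul_smul₀ (by simpa using hq)]
  rw [Y, sub_mul, smul_mul_assoc, h, mul_sub, mul_smul_comm, (commute_Cc_Xm q).eq]
  match_scalars
  · field_simp; ring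
  · field_simp

theorem Y_mul_X0 (hq : q ≠ 0) (hq2 : q ^ 2 ≠ 1) :
    Y q * X0 q = (q - q⁻¹)⁻¹ • (Y q * (Cc q - Y q)) := by
  rw [Y, sub_sub_cancel, mul_smul_comm, inv_smul_smul₀ (sub_inv_ne_zero hq hq2)]

theorem Xp_mul_Xm_sub_Xm_mul_Xp (hq : q ≠ 0) (hq2 : q ^ 2 ≠ 1) :
    Xp q * Xm q - Xm q * Xp q
      = ((1 + (q ^ 2)⁻¹) * (q / (q - q⁻¹))) • (Y q * (Cc q - Y q)) := by
  rw [rel_Xp_Xm, Y_mul_X0 hq hq2, smul_smul]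
  congr 1
  field_simp

theorem Xm_mul_Xp_sub_Xp_mul_Xm (hq : q ≠ 0) (hq2 : q ^ 2 ≠ 1) :
    Xm q * Xp q - Xp q * Xm q
      = ((1 + q ^ 2) * -(q⁻¹ / (q - q⁻¹))) • (Y q * (Cc q - Y q)) := by
  rw [← neg_sub, Xp_mul_Xm_sub_Xm_mul_Xp hq hq2]
  match_scalars
  field_simp
  ring

variable {l : ℕ}

theorem Xp_pow_mem_center (hq : q ≠ 0) (hq2 : q ^ 2 ≠ 1) (hql : q ^ (2 * l) = 1) :
    Xp q ^ l ∈ Subalgebra.center ℂ (B q) := by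
  have ht : (q ^ 2)⁻¹ ≠ 1 := inv_ne_one.mpr hq2
  have htl : ((q ^ 2)⁻¹) ^ l = 1 := by rw [inv_pow, ← pow_mul, hql, inv_one]
  have hC := (commute_Cc_Xp q).pow_right l
  refine mem_center_of_commute q _ ?_ (Commute.self_pow _ _) ?_ hC
  · exact commute_X0_of_commute_Cc_of_commute_Y hq hq2 hC
      (commute_pow_right_of_mul_eq_smul (Y_mul_Xp hq) htl)
  · exact (commute_pow_of_mul_sub_mul_eq_smul (commute_Cc_Xp q) (Y_mul_Xp hq)
      (Xp_mul_Xm_sub_Xm_mul_Xp hq hq2) ht htl).symm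

theorem Xm_pow_mem_center (hq : q ≠ 0) (hq2 : q ^ 2 ≠ 1) (hql : q ^ (2 * l) = 1) :
    Xm q ^ l ∈ Subalgebra.center ℂ (B q) := by
  have htl : (q ^ 2) ^ l = 1 := by rw [← pow_mul, hql]
  have hC := (commute_Cc_Xm q).pow_right l
  refine mem_center_of_commute q _ ?_ ?_ (Commute.self_pow _ _) hC
  · exact commute_X0_of_commute_Cc_of_commute_Y hq hq2 hC
      (commute_pow_right_of_mul_eq_smul (Y_mul_Xm hq) htl)
  · exact (commute_pow_of_mul_sub_mul_eq_smul (commute_Cc_Xm q) (Y_mul_Xm hq)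
      (Xm_mul_Xp_sub_Xp_mul_Xm hq hq2) hq2 htl).symm

theorem Y_pow_mem_center (hq : q ≠ 0) (hql : q ^ (2 * l) = 1) :
    Y q ^ l ∈ Subalgebra.center ℂ (B q) := by
  have htl : (q ^ 2) ^ l = 1 := by rw [← pow_mul, hql]
  refine mem_center_of_commute q _ ((commute_X0_Y q).pow_right l) ?_ ?_
    ((commute_Cc_Y q).pow_right l)
  · exact (commute_pow_left_of_mul_eq_smul (Y_mul_Xp hq) (by rw [inv_pow, htl, inv_one])).symm
  · exact (commute_pow_left_of_mul_eq_smul (Y_mul_Xm hq) htl).symm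

theorem pow_l_central_general (q : ℂ) (hq : q ≠ 0) (hq2 : q ^ 2 ≠ 1)
    (l : ℕ) (hq2l : q ^ (2 * l) = 1) :
    Xp q ^ l ∈ Subalgebra.center ℂ (B q) ∧
    Xm q ^ l ∈ Subalgebra.center ℂ (B q) ∧
    (Cc q - (q - q⁻¹) • X0 q) ^ l ∈ Subalgebra.center ℂ (B q) :=
  ⟨Xp_pow_mem_center hq hq2 hq2l, Xm_pow_mem_center hq hq2 hq2l, Y_pow_mem_center hq hq2l⟩

/-- if l ≥ 2 is the smallest positive integer with q^{2l} = 1,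
then X₊^l, X₋^l and (C − λX₀)^l are central in B. -/
theorem pow_l_central (q : ℂ) (hq : q ≠ 0) (hq2 : q ^ 2 ≠ 1)
    (l : ℕ) (hl : 2 ≤ l) (hq2l : q ^ (2 * l) = 1)
    (hmin : ∀ m : ℕ, 0 < m → m < l → q ^ (2 * m) ≠ 1) :
    Xp q ^ l ∈ Subalgebra.center ℂ (B q) ∧
    Xm q ^ l ∈ Subalgebra.center ℂ (B q) ∧
    (Cc q - (q - q⁻¹) • X0 q) ^ l ∈ Subalgebra.center ℂ (B q) :=
  pow_l_central_general q hq hq2 l hq2l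

end SL2q
end
end

section
/- Assume q^{2l} = 1 where l ≥ 2 is the smallest positive integer with this property. Let A₊ be the unital ℂ-subalgebra of B generated by C, C'₂, X₊^l and (C−λX₀)^l, and let A₋ be the unital ℂ-subalgebra generated by C, C'₂, X₋^l and (C−λX₀)^l. Then A₊ ∩ A₋ equals the unital ℂ-subalgebra generated by C, C'₂ and (C−λX₀)^l. -/
noncomputable section

/-!
Since every defining relation of `B` is homogeneous for the degrees `deg X₊ = 1`, `deg X₋ = -1`,
`deg X₀ = deg C = 0`, the algebra `B` is `ℤ`-graded; the grading is realised as the algebra map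
`x ↦ ∑ₙ xₙ Tⁿ` into `B[ℤ]`, which is split by `T ↦ 1`. All generators of `A₊` are homogeneous of
degree `≥ 0`, those of degree `0` lying in `A₀ = ⟨C, C'₂, (C - λX₀)ˡ⟩`. On elements supported in
degrees `≥ 0` the degree-zero component is multiplicative, so every element of `A₊` lives in
degrees `≥ 0` and has its degree-zero component in `A₀`. Symmetrically for `A₋` with degrees
`≤ 0`. Hence an element of `A₊ ∩ A₋` is its own degree-zero component, which lies in `A₀`.
-/

open scoped AddMonoidAlgebra

namespace AddMonoidAlgebra

variable {k R G : Type*} [CommSemiring k] [Semiring R] [Algebra k R] [AddMonoid G]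

lemma coeff_mul_zero_of_support_subset {S : AddSubmonoid G}
    (hS : ∀ a ∈ S, ∀ b ∈ S, a + b = 0 → a = 0) {f g : R[G]}
    (hf : (f.coeff.support : Set G) ⊆ S) (hg : (g.coeff.support : Set G) ⊆ S) :
    (f * g).coeff 0 = f.coeff 0 * g.coeff 0 := by
  classical
  rw [coeff_mul, Finsupp.sum, Finset.sum_eq_single 0]
  · simp +contextual
  · exact fun a ha ha0 => Finset.sum_eq_zero fun b hb =>
      if_neg fun hab => ha0 (hS a (hf ha) b (hg hb) hab)
  · intro h
    simp [Finsupp.notMem_support_iff.mp h]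

lemma support_single_subset_submonoid {S : AddSubmonoid G} {g : G} (hg : g ∈ S) (r : R) :
    ((single g r).coeff.support : Set G) ⊆ S := by
  classical
  intro a ha
  rw [coeff_single, Finset.mem_coe, Finsupp.mem_support_single] at ha
  exact ha.1 ▸ hg

def coneSubalgebra (A₀ : Subalgebra k R) (S : AddSubmonoid G)
    (hS : ∀ a ∈ S, ∀ b ∈ S, a + b = 0 → a = 0) : Subalgebra k R[G] where
  carrier := {f | (f.coeff.support : Set G) ⊆ S ∧ f.coeff 0 ∈ A₀}
  add_mem' := by
    classical
    rintro f g ⟨hfS, hf0⟩ ⟨hgS, hg0⟩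
    refine ⟨fun a ha => ?_, add_mem hf0 hg0⟩
    rcases Finset.mem_union.mp (Finsupp.support_add ha) with ha | ha
    exacts [hfS ha, hgS ha]
  mul_mem' := by
    classical
    rintro f g ⟨hfS, hf0⟩ ⟨hgS, hg0⟩
    refine ⟨fun a ha => ?_, ?_⟩
    · have ha := support_coeff_mul_subset f g ha
      rw [← Finset.mem_coe, Finset.coe_add] at ha
      exact AddSubmonoid.add_subset hfS hgS ha
    · rw [coeff_mul_zero_of_support_subset hS hfS hgS]
      exact mul_mem hf0 hg0
  algebraMap_mem' r := by
    rw [coe_algebraMap, Function.comp_apply]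
    exact ⟨support_single_subset_submonoid S.zero_mem _, by simp [A₀.algebraMap_mem r]⟩

variable {A₀ : Subalgebra k R} {S : AddSubmonoid G} {hS : ∀ a ∈ S, ∀ b ∈ S, a + b = 0 → a = 0}

lemma single_mem_coneSubalgebra {g : G} {r : R} (hg : g ∈ S) (hr : g = 0 → r ∈ A₀) :
    single g r ∈ coneSubalgebra A₀ S hS := by
  classical
  refine ⟨support_single_subset_submonoid hg r, ?_⟩
  rw [coeff_single, Finsupp.single_apply]
  split_ifs with h
  exacts [hr h, zero_mem A₀]

lemma exists_eq_single_zero_of_mem_coneSubalgebra {T : AddSubmonoid G}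
    {hT : ∀ a ∈ T, ∀ b ∈ T, a + b = 0 → a = 0} (hST : ∀ g ∈ S, g ∈ T → g = 0) {f : R[G]}
    (hfS : f ∈ coneSubalgebra A₀ S hS) (hfT : f ∈ coneSubalgebra A₀ T hT) :
    ∃ r ∈ A₀, f = single 0 r := by
  refine ⟨f.coeff 0, hfS.2, ?_⟩
  rw [← coeff_inj, coeff_single, Finsupp.eq_single_iff]
  exact ⟨fun g hg => Finset.mem_singleton.mpr (hST g (hfS.1 hg) (hfT.1 hg)), rfl⟩

end AddMonoidAlgebra

namespace Int

lemma eq_zero_of_add_eq_zero_of_mem_closure_singleton {e a b : ℤ}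
    (ha : a ∈ AddSubmonoid.closure {e}) (hb : b ∈ AddSubmonoid.closure {e}) (hab : a + b = 0) :
    a = 0 := by
  obtain ⟨m, rfl⟩ := AddSubmonoid.mem_closure_singleton.mp ha
  obtain ⟨n, rfl⟩ := AddSubmonoid.mem_closure_singleton.mp hb
  rw [← add_nsmul, nsmul_eq_mul, mul_eq_zero] at hab
  rcases hab with h | rfl
  · rw [show m = 0 by omega, zero_nsmul]
  · exact nsmul_zero m

lemma eq_zero_of_mem_closure_singleton_of_mem_closure_neg {e g : ℤ}
    (h : g ∈ AddSubmonoid.closure {e}) (hneg : g ∈ AddSubmonoid.closure {-e}) : g = 0 := by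
  obtain ⟨n, hn⟩ := AddSubmonoid.mem_closure_singleton.mp hneg
  refine eq_zero_of_add_eq_zero_of_mem_closure_singleton h
    (AddSubmonoid.mem_closure_singleton.mpr ⟨n, ?_⟩) (add_neg_cancel g)
  rw [← hn, smul_neg, neg_neg]

end Int

namespace SL2q

open AddMonoidAlgebra

def degree : Fin 4 → ℤ := ![0, 1, -1, 0]

section Grading

variable (q : ℂ)

def gradingFree : Free →ₐ[ℂ] (B q)[ℤ] :=
  FreeAlgebra.lift ℂ fun i => single (degree i) (RingQuot.mkAlgHom ℂ (Rel q) (FreeAlgebra.ι ℂ i))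

lemma gradingFree_rel ⦃x y : Free⦄ (h : Rel q x y) : gradingFree q x = gradingFree q y := by
  have hxy := RingQuot.mkAlgHom_rel ℂ h
  cases h <;>
    simp only [gX0, gXp, gXm, gC, gradingFree, degree, map_sub, map_smul, map_mul, map_neg,
      FreeAlgebra.lift_ι_apply, Matrix.cons_val, single_mul_single, smul_single, ← single_sub,
      ← single_neg, zero_add, add_zero, add_neg_cancel, neg_add_cancel] at hxy ⊢ <;>
    rw [hxy]

def grading : B q →ₐ[ℂ] (B q)[ℤ] := RingQuot.liftAlgHom ℂ ⟨gradingFree q, gradingFree_rel q⟩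

lemma grading_mkAlgHom_ι (i : Fin 4) :
    grading q (RingQuot.mkAlgHom ℂ (Rel q) (FreeAlgebra.ι ℂ i)) =
      single (degree i) (RingQuot.mkAlgHom ℂ (Rel q) (FreeAlgebra.ι ℂ i)) := by
  rw [grading, RingQuot.liftAlgHom_mkAlgHom_apply, gradingFree, FreeAlgebra.lift_ι_apply]

lemma grading_X0 : grading q (X0 q) = single 0 (X0 q) := grading_mkAlgHom_ι q 0
lemma grading_Xp : grading q (Xp q) = single 1 (Xp q) := grading_mkAlgHom_ι q 1
lemma grading_Xm : grading q (Xm q) = single (-1) (Xm q) := grading_mkAlgHom_ι q 2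
lemma grading_Cc : grading q (Cc q) = single 0 (Cc q) := grading_mkAlgHom_ι q 3

lemma grading_C2 : grading q (C2 q) = single 0 (C2 q) := by
  simp only [C2, map_add, map_mul, map_smul, map_pow, grading_X0, grading_Xp, grading_Xm,
    grading_Cc, single_mul_single, smul_single, single_pow, neg_add_cancel, zero_add, smul_zero,
    ← single_add]

lemma grading_Cc_sub_smul_X0_pow (l : ℕ) :
    grading q ((Cc q - (q - q⁻¹) • X0 q) ^ l) = single 0 ((Cc q - (q - q⁻¹) • X0 q) ^ l) := by
  simp only [map_pow, map_sub, map_smul, grading_X0, grading_Cc, smul_single, ← single_sub,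
    single_pow, smul_zero]

def forgetDegree : (B q)[ℤ] →ₐ[ℂ] B q :=
  liftNCAlgHom (AlgHom.id ℂ (B q)) 1 fun _ _ => Commute.one_right _

lemma forgetDegree_single (n : ℤ) (x : B q) : forgetDegree q (single n x) = x := by
  rw [forgetDegree, coe_liftNCAlgHom, liftNC_single, MonoidHom.one_apply, mul_one]
  rfl

lemma forgetDegree_grading (x : B q) : forgetDegree q (grading q x) = x := by
  suffices (forgetDegree q).comp (grading q) = AlgHom.id ℂ (B q) from congr($this x)
  refine RingQuot.ringQuot_ext' ℂ _ _ (FreeAlgebra.hom_ext (funext fun i => ?_))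
  simp only [Function.comp_apply, AlgHom.comp_apply, AlgHom.id_apply, grading_mkAlgHom_ι,
    forgetDegree_single]

end Grading

lemma grading_mem_coneSubalgebra_of_mem_adjoin (q : ℂ) (l : ℕ) {X : B q} {e : ℤ} (he : e ≠ 0)
    (hX : grading q X = single e X) {x : B q}
    (hx : x ∈ Algebra.adjoin ℂ {Cc q, C2 q, X ^ l, (Cc q - (q - q⁻¹) • X0 q) ^ l}) :
    grading q x ∈ coneSubalgebra (Algebra.adjoin ℂ {Cc q, C2 q, (Cc q - (q - q⁻¹) • X0 q) ^ l})
      (AddSubmonoid.closure {e})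
      fun _ ha _ hb => Int.eq_zero_of_add_eq_zero_of_mem_closure_singleton ha hb := by
  refine (Subalgebra.mem_comap _ _ _).mp (Algebra.adjoin_le (S := Subalgebra.comap _ _) ?_ hx)
  rintro y (rfl | rfl | rfl | rfl) <;> rw [SetLike.mem_coe, Subalgebra.mem_comap]
  · rw [grading_Cc]
    exact single_mem_coneSubalgebra (zero_mem _) fun _ => Algebra.subset_adjoin (by simp)
  · rw [grading_C2]
    exact single_mem_coneSubalgebra (zero_mem _) fun _ => Algebra.subset_adjoin (by simp)
  · rw [map_pow, hX, single_pow]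
    refine single_mem_coneSubalgebra (AddSubmonoid.mem_closure_singleton.mpr ⟨l, rfl⟩) fun h => ?_
    obtain rfl : l = 0 := by simpa [he] using h
    rw [pow_zero X]
    exact Subalgebra.one_mem _
  · rw [grading_Cc_sub_smul_X0_pow]
    exact single_mem_coneSubalgebra (zero_mem _) fun _ => Algebra.subset_adjoin (by simp)

theorem adjoin_inter_general (q : ℂ) (l : ℕ) :
    Algebra.adjoin ℂ {Cc q, C2 q, Xp q ^ l, (Cc q - (q - q⁻¹) • X0 q) ^ l}
      ⊓ Algebra.adjoin ℂ {Cc q, C2 q, Xm q ^ l, (Cc q - (q - q⁻¹) • X0 q) ^ l}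
      = Algebra.adjoin ℂ {Cc q, C2 q, (Cc q - (q - q⁻¹) • X0 q) ^ l} := by
  refine le_antisymm ?_ (le_inf (Algebra.adjoin_mono ?_) (Algebra.adjoin_mono ?_))
  · rintro x ⟨hxp, hxm⟩
    obtain ⟨r, hr, hxr⟩ := exists_eq_single_zero_of_mem_coneSubalgebra
      (fun _ => Int.eq_zero_of_mem_closure_singleton_of_mem_closure_neg)
      (grading_mem_coneSubalgebra_of_mem_adjoin q l one_ne_zero (grading_Xp q) hxp)
      (grading_mem_coneSubalgebra_of_mem_adjoin q l (neg_ne_zero.mpr one_ne_zero) (grading_Xm q)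
        hxm)
    rw [← forgetDegree_grading q x, hxr, forgetDegree_single]
    exact hr
  all_goals exact Set.insert_subset_insert (Set.insert_subset_insert (Set.subset_insert _ _))

/-- at a root of unity (l ≥ 2 minimal with q^{2l} = 1), the
intersection A₊ ∩ A₋ is the unital subalgebra generated by C, C'₂ and
(C−λX₀)^l. -/
theorem adjoin_inter (q : ℂ) (hq : q ≠ 0) (hq2 : q ^ 2 ≠ 1)
    (l : ℕ) (hl : 2 ≤ l) (hq2l : q ^ (2 * l) = 1)
    (hmin : ∀ m : ℕ, 0 < m → m < l → q ^ (2 * m) ≠ 1) :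
    Algebra.adjoin ℂ {Cc q, C2 q, Xp q ^ l, (Cc q - (q - q⁻¹) • X0 q) ^ l}
      ⊓ Algebra.adjoin ℂ {Cc q, C2 q, Xm q ^ l, (Cc q - (q - q⁻¹) • X0 q) ^ l}
      = Algebra.adjoin ℂ {Cc q, C2 q, (Cc q - (q - q⁻¹) • X0 q) ^ l} :=
  adjoin_inter_general q l

end SL2q
end
end

section
/- Assume q^{2l} = 1 where l ≥ 2 is the smallest positive integer with this property. Let (V; ρ₀, ρ₊, ρ₋, ρ_C) be a finite-dimensional irreducible representation of B over ℂ, and let c ∈ ℂ be the scalar by which ρ_C acts. Then there exists a nonzero vector v₀ ∈ V and a scalar x₀ ∈ ℂ such that ρ₀ v₀ = x₀ v₀ and V is spanned by the 2l vectors ρ₊^p v₀ and ρ₋^p v₀ for p = 0, 1, …, l−1. -/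
noncomputable section

namespace SL2q

set_option maxHeartbeats 8000000 in
/-- on a finite-dimensional irreducible representation
(V; ρ₀, ρ₊, ρ₋, ρ_C) of B (q a primitive 2l-th root of unity, l ≥ 2), where
ρ_C acts by the scalar c, there is a nonzero eigenvector v₀ of ρ₀ such that V
is spanned by the 2l vectors ρ₊^p v₀, ρ₋^p v₀, p = 0, …, l−1. -/
theorem exists_generating_eigenvector (q : ℂ) (hq : q ≠ 0) (hq2 : q ^ 2 ≠ 1)
    (l : ℕ) (hl : 2 ≤ l) (hq2l : q ^ (2 * l) = 1)
    (hmin : ∀ m : ℕ, 0 < m → m < l → q ^ (2 * m) ≠ 1)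
    (V : Type) [AddCommGroup V] [Module ℂ V] [FiniteDimensional ℂ V]
    (ρ0 ρp ρm ρC : Module.End ℂ V)
    (h1 : (q ^ 2 : ℂ) • (ρ0 * ρp) - ρp * ρ0 = q • (ρC * ρp))
    (h2 : (q⁻¹ ^ 2 : ℂ) • (ρ0 * ρm) - ρm * ρ0 = -(q⁻¹ • (ρC * ρm)))
    (h3 : ρp * ρm - ρm * ρp = ((q + q⁻¹) : ℂ) • ((ρC - (q - q⁻¹) • ρ0) * ρ0))
    (hc0 : Commute ρC ρ0) (hcp : Commute ρC ρp) (hcm : Commute ρC ρm)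
    (hnt : Nontrivial V)
    (hirr : ∀ W : Submodule ℂ V,
      (∀ v ∈ W, ρ0 v ∈ W) → (∀ v ∈ W, ρp v ∈ W) →
      (∀ v ∈ W, ρm v ∈ W) → (∀ v ∈ W, ρC v ∈ W) → W = ⊥ ∨ W = ⊤)
    (c : ℂ) (hC : ρC = c • (1 : Module.End ℂ V)) :
    ∃ v0 : V, v0 ≠ 0 ∧ ∃ x0 : ℂ, ρ0 v0 = x0 • v0 ∧
      Submodule.span ℂ
        ((Set.range fun p : Fin l => (ρp ^ (p : ℕ)) v0) ∪
         (Set.range fun p : Fin l => (ρm ^ (p : ℕ)) v0)) = ⊤ := by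
  haveI := hnt
  rw [hC] at h1 h2 h3
  simp only [smul_mul_assoc, one_mul, smul_smul, sub_mul, smul_sub] at h1 h2 h3
  -- h1 : q^2 • (ρ0*ρp) - ρp*ρ0 = (q*c) • ρp
  -- h3 : ρp*ρm - ρm*ρp = (q+q⁻¹)•(c•ρ0 - ((q-q⁻¹)*?)•(ρ0*ρ0))  (to inspect)
  have L1 : ρ0 * ρp = (q⁻¹^2) • (ρp * ρ0) + (q⁻¹ * c) • ρp := by
    linear_combination (norm := match_scalars <;> (repeat (first | ring1 | (field_simp; try ring_nf)))) (q⁻¹^2 : ℂ) • h1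
  have L2 : ρ0 * ρm = (q^2) • (ρm * ρ0) - (q * c) • ρm := by
    linear_combination (norm := match_scalars <;> (repeat (first | ring1 | (field_simp; try ring_nf)))) (q^2 : ℂ) • h2
  have L3 : ρp * ρm = ρm * ρp + ((q+q⁻¹)*c) • ρ0 - ((q+q⁻¹)*(q-q⁻¹)) • (ρ0*ρ0) := by
    linear_combination (norm := match_scalars <;> (repeat (first | ring1 | (field_simp; try ring_nf)))) h3
  have L1x : ∀ X : Module.End ℂ V, ρ0 * (ρp * X)
      = (q⁻¹^2) • (ρp * (ρ0 * X)) + (q⁻¹ * c) • (ρp * X) := by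
    intro X; rw [← mul_assoc, L1]; simp only [add_mul, smul_mul_assoc, mul_assoc]
  have L2x : ∀ X : Module.End ℂ V, ρ0 * (ρm * X)
      = (q^2) • (ρm * (ρ0 * X)) - (q * c) • (ρm * X) := by
    intro X; rw [← mul_assoc, L2]; simp only [sub_mul, smul_mul_assoc, mul_assoc]
  have L3x : ∀ X : Module.End ℂ V, ρp * (ρm * X)
      = ρm * (ρp * X) + ((q+q⁻¹)*c) • (ρ0 * X) - ((q+q⁻¹)*(q-q⁻¹)) • (ρ0 * (ρ0 * X)) := by
    intro X; rw [← mul_assoc, L3]; simp only [add_mul, sub_mul, smul_mul_assoc, mul_assoc]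
  -- scalar facts
  have hq2l' : ((q:ℂ)^2)^l = 1 := by rw [← pow_mul]; exact hq2l
  have hq2i : ((q:ℂ)⁻¹)^2 ≠ 1 := by
    intro h; apply hq2
    have : ((q:ℂ)^2)⁻¹ = 1 := by rw [← inv_pow]; exact h
    rw [inv_eq_one] at this; exact this
  have hq2il : (((q:ℂ)⁻¹)^2)^l = 1 := by
    rw [inv_pow, inv_pow, ← pow_mul, hq2l, inv_one]
  have sum1 : ∑ j ∈ Finset.range l, ((q:ℂ)^2)^j = 0 := by
    rw [geom_sum_eq hq2, hq2l', sub_self, zero_div]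
  have sum2 : ∑ j ∈ Finset.range l, (((q:ℂ)⁻¹)^2)^j = 0 := by
    rw [geom_sum_eq hq2i, hq2il, sub_self, zero_div]
  have hll : l - 1 + 1 = l := by omega
  have Apl1 : (((q:ℂ)⁻¹)^2)^(l-1) = q^2 := by
    have h1' : (((q:ℂ)⁻¹)^2)^(l-1) * ((q:ℂ)⁻¹)^2 = 1 := by
      rw [← pow_succ, hll, hq2il]
    field_simp at h1'
    field_simp
    linear_combination h1'
  have Spl1 : ∑ j ∈ Finset.range (l-1), (((q:ℂ)⁻¹)^2)^j = -(q^2) := by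
    have e := Finset.sum_range_succ (fun j => (((q:ℂ)⁻¹)^2)^j) (l-1)
    rw [hll, sum2, Apl1] at e
    linear_combination -e
  have Aml1 : ((q:ℂ)^2)^(l-1) = (q⁻¹)^2 := by
    have h1' : ((q:ℂ)^2)^(l-1) * (q:ℂ)^2 = 1 := by
      rw [← pow_succ, hll, hq2l']
    field_simp
    linear_combination h1'
  have Sml1 : ∑ j ∈ Finset.range (l-1), ((q:ℂ)^2)^j = -((q⁻¹)^2) := by
    have e := Finset.sum_range_succ (fun j => ((q:ℂ)^2)^j) (l-1)
    rw [hll, sum1, Aml1] at e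
    linear_combination -e
  -- moving ρ0 past powers
  have keyP : ∀ k : ℕ, ρ0 * ρp^k
      = ((q⁻¹:ℂ)^(2*k)) • (ρp^k * ρ0)
        + (q⁻¹*c*(∑ j ∈ Finset.range k, (((q:ℂ)⁻¹)^2)^j)) • ρp^k := by
    intro k; induction k with
    | zero => simp
    | succ k ih =>
      rw [pow_succ, Finset.sum_range_succ, ← mul_assoc, ih]
      simp only [add_mul, smul_mul_assoc, mul_assoc, L1, mul_add, mul_smul_comm, smul_add,
        smul_smul, pow_succ, pow_mul]
      match_scalars <;> (repeat (first | ring1 | (field_simp; try ring_nf)))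
  have keyM : ∀ k : ℕ, ρ0 * ρm^k
      = ((q:ℂ)^(2*k)) • (ρm^k * ρ0)
        - (q*c*(∑ j ∈ Finset.range k, ((q:ℂ)^2)^j)) • ρm^k := by
    intro k; induction k with
    | zero => simp
    | succ k ih =>
      rw [pow_succ, Finset.sum_range_succ, ← mul_assoc, ih]
      simp only [sub_mul, smul_mul_assoc, mul_assoc, L2, mul_sub, mul_smul_comm, smul_sub,
        smul_smul, pow_succ, pow_mul]
      match_scalars <;> (repeat (first | ring1 | (field_simp; try ring_nf)))
  -- specializations
  have keyPl1 : ρ0 * ρp^(l-1) = (q^2) • (ρp^(l-1) * ρ0) - (q*c) • ρp^(l-1) := by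
    rw [keyP (l-1), pow_mul, Apl1, Spl1]
    match_scalars <;> (repeat (first | ring1 | (field_simp; try ring_nf)))
  have keyMl1 : ρ0 * ρm^(l-1) = (q⁻¹^2) • (ρm^(l-1) * ρ0) + (q⁻¹*c) • ρm^(l-1) := by
    rw [keyM (l-1), pow_mul, Aml1, Sml1]
    match_scalars <;> (repeat (first | ring1 | (field_simp; try ring_nf)))
  have keyPl1x : ∀ X : Module.End ℂ V, ρ0 * (ρp^(l-1) * X)
      = (q^2) • (ρp^(l-1) * (ρ0 * X)) - (q*c) • (ρp^(l-1) * X) := by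
    intro X; rw [← mul_assoc, keyPl1]; simp only [sub_mul, smul_mul_assoc, mul_assoc]
  have keyMl1x : ∀ X : Module.End ℂ V, ρ0 * (ρm^(l-1) * X)
      = (q⁻¹^2) • (ρm^(l-1) * (ρ0 * X)) + (q⁻¹*c) • (ρm^(l-1) * X) := by
    intro X; rw [← mul_assoc, keyMl1]; simp only [add_mul, smul_mul_assoc, mul_assoc]
  have Comm0P : ρ0 * ρp^l = ρp^l * ρ0 := by
    rw [keyP l, pow_mul, hq2il, sum2]
    simp only [one_smul, mul_zero, zero_smul, add_zero]
  have Comm0M : ρ0 * ρm^l = ρm^l * ρ0 := by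
    rw [keyM l, pow_mul, hq2l', sum1]
    simp only [one_smul, mul_zero, zero_smul, sub_zero]
  -- the Casimir element
  set Q : Module.End ℂ V := ρm * ρp + (q⁻¹^2) • (ρ0*ρ0) + (q⁻¹*c) • ρ0 with hQdef
  have Qc0 : ρ0 * Q = Q * ρ0 := by
    rw [hQdef]
    simp only [mul_add, add_mul, mul_smul_comm, smul_mul_assoc, mul_assoc,
      L1, L2, L1x, L2x, smul_add, smul_sub, smul_smul, sub_mul, mul_sub, one_mul, mul_one]
    match_scalars <;> (repeat (first | ring1 | (field_simp; try ring_nf)))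
  have Qcp : ρp * Q = Q * ρp := by
    rw [hQdef]
    simp only [mul_add, add_mul, mul_smul_comm, smul_mul_assoc, mul_assoc,
      L1, L2, L3, L1x, L2x, L3x, smul_add, smul_sub, smul_smul, sub_mul, mul_sub,
      one_mul, mul_one]
    match_scalars <;> (repeat (first | ring1 | (field_simp; try ring_nf)))
  have Qcm : ρm * Q = Q * ρm := by
    rw [hQdef]
    simp only [mul_add, add_mul, mul_smul_comm, smul_mul_assoc, mul_assoc,
      L1, L2, L3, L1x, L2x, L3x, smul_add, smul_sub, smul_smul, sub_mul, mul_sub,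
      one_mul, mul_one]
    match_scalars <;> (repeat (first | ring1 | (field_simp; try ring_nf)))
  -- Schur-type argument
  have schur : ∀ T : Module.End ℂ V, ρ0 * T = T * ρ0 → ρp * T = T * ρp → ρm * T = T * ρm →
      ∃ t : ℂ, T = t • (1 : Module.End ℂ V) := by
    intro T c0 cp cm
    obtain ⟨t, ht⟩ := Module.End.exists_eigenvalue T
    refine ⟨t, ?_⟩
    set Wk : Submodule ℂ V := LinearMap.ker (T - t • (1 : Module.End ℂ V)) with hWk
    have hmem : ∀ v : V, v ∈ Wk ↔ T v = t • v := by
      intro v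
      simp [hWk, LinearMap.mem_ker, LinearMap.sub_apply, LinearMap.smul_apply, sub_eq_zero]
    have step : ∀ S : Module.End ℂ V, S * T = T * S → ∀ v ∈ Wk, S v ∈ Wk := by
      intro S hS v hv
      rw [hmem] at hv ⊢
      have e1 : T (S v) = (T * S) v := rfl
      rw [e1, ← hS]
      show S (T v) = t • S v
      rw [hv, map_smul]
    have stepC : ∀ v ∈ Wk, ρC v ∈ Wk := by
      intro v hv
      rw [hC]
      show c • (1 : Module.End ℂ V) v ∈ Wk
      exact Wk.smul_mem c hv
    rcases hirr Wk (step ρ0 c0) (step ρp cp) (step ρm cm) stepC with hbot | htop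
    · exfalso
      obtain ⟨v, hv⟩ := ht.exists_hasEigenvector
      have hvW : v ∈ Wk := (hmem v).2 hv.apply_eq_smul
      rw [hbot, Submodule.mem_bot] at hvW
      exact hv.2 hvW
    · ext v
      have hvW : v ∈ Wk := htop ▸ Submodule.mem_top
      rw [hmem] at hvW
      simpa using hvW
  obtain ⟨κ, hQs⟩ := schur Q Qc0 Qcp Qcm
  rw [hQdef] at hQs
  have MP : ρm * ρp = κ • (1 : Module.End ℂ V) - (q⁻¹^2) • (ρ0*ρ0) - (q⁻¹*c) • ρ0 := by
    linear_combination (norm := module) hQs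
  have PM : ρp * ρm = κ • (1 : Module.End ℂ V) - (q^2) • (ρ0*ρ0) + (q*c) • ρ0 := by
    linear_combination (norm := match_scalars <;>
      (repeat (first | ring1 | (field_simp; try ring_nf)))) L3 + hQs
  have hples : ρp^l = ρp * ρp^(l-1) := by
    conv_lhs => rw [show l = 1 + (l-1) by omega]
    rw [pow_add, pow_one]
  have hples' : ρp^l = ρp^(l-1) * ρp := by
    conv_lhs => rw [show l = (l-1) + 1 by omega]
    rw [pow_succ]
  have hmles : ρm^l = ρm * ρm^(l-1) := by
    conv_lhs => rw [show l = 1 + (l-1) by omega]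
    rw [pow_add, pow_one]
  have hmles' : ρm^l = ρm^(l-1) * ρm := by
    conv_lhs => rw [show l = (l-1) + 1 by omega]
    rw [pow_succ]
  have CommMP : ρm * ρp^l = ρp^l * ρm := by
    conv_lhs => rw [hples, ← mul_assoc, MP]
    conv_rhs => rw [hples', mul_assoc, PM]
    simp only [sub_mul, add_mul, smul_mul_assoc, mul_assoc, one_mul, mul_one,
      keyPl1, keyPl1x, mul_sub, mul_add, mul_smul_comm, smul_sub, smul_add, smul_smul]
    match_scalars <;> (repeat (first | ring1 | (field_simp; try ring_nf)))
  have CommPM : ρp * ρm^l = ρm^l * ρp := by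
    conv_lhs => rw [hmles, ← mul_assoc, PM]
    conv_rhs => rw [hmles', mul_assoc, MP]
    simp only [sub_mul, add_mul, smul_mul_assoc, mul_assoc, one_mul, mul_one,
      keyMl1, keyMl1x, mul_sub, mul_add, mul_smul_comm, smul_sub, smul_add, smul_smul]
    match_scalars <;> (repeat (first | ring1 | (field_simp; try ring_nf)))
  obtain ⟨μ, hμ⟩ := schur (ρp^l) Comm0P ((Commute.refl ρp).pow_right l) CommMP
  obtain ⟨ν, hν⟩ := schur (ρm^l) Comm0M CommPM ((Commute.refl ρm).pow_right l)
  -- eigenvector of ρ0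
  obtain ⟨x0, hx0⟩ := Module.End.exists_eigenvalue ρ0
  obtain ⟨v0, hv0⟩ := hx0.exists_hasEigenvector
  have eigP : ∀ p : ℕ, ∃ y : ℂ, ρ0 ((ρp^p) v0) = y • ((ρp^p) v0) := by
    intro p; induction p with
    | zero => exact ⟨x0, by simpa using hv0.apply_eq_smul⟩
    | succ k ih =>
      obtain ⟨y, hy⟩ := ih
      refine ⟨q⁻¹^2*y + q⁻¹*c, ?_⟩
      have e1 : (ρp^(k+1)) v0 = ρp ((ρp^k) v0) := by rw [pow_succ']; rfl
      rw [e1]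
      have e2 : ρ0 (ρp ((ρp^k) v0)) = (ρ0 * ρp) ((ρp^k) v0) := rfl
      rw [e2, L1]
      simp only [LinearMap.add_apply, LinearMap.smul_apply, Module.End.mul_apply, hy,
        map_smul, smul_smul]
      module
  have eigM : ∀ p : ℕ, ∃ y : ℂ, ρ0 ((ρm^p) v0) = y • ((ρm^p) v0) := by
    intro p; induction p with
    | zero => exact ⟨x0, by simpa using hv0.apply_eq_smul⟩
    | succ k ih =>
      obtain ⟨y, hy⟩ := ih
      refine ⟨q^2*y - q*c, ?_⟩
      have e1 : (ρm^(k+1)) v0 = ρm ((ρm^k) v0) := by rw [pow_succ']; rfl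
      rw [e1]
      have e2 : ρ0 (ρm ((ρm^k) v0)) = (ρ0 * ρm) ((ρm^k) v0) := rfl
      rw [e2, L2]
      simp only [LinearMap.sub_apply, LinearMap.smul_apply, Module.End.mul_apply, hy,
        map_smul, smul_smul]
      module
  refine ⟨v0, hv0.2, x0, hv0.apply_eq_smul, ?_⟩
  set S : Set V := (Set.range fun p : Fin l => (ρp ^ (p : ℕ)) v0) ∪
      (Set.range fun p : Fin l => (ρm ^ (p : ℕ)) v0) with hSdef
  set W : Submodule ℂ V := Submodule.span ℂ S with hWdef
  have memP : ∀ p : ℕ, p < l → (ρp^p) v0 ∈ W := fun p hp =>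
    Submodule.subset_span (Or.inl ⟨⟨p, hp⟩, rfl⟩)
  have memM : ∀ p : ℕ, p < l → (ρm^p) v0 ∈ W := fun p hp =>
    Submodule.subset_span (Or.inr ⟨⟨p, hp⟩, rfl⟩)
  have memv0 : v0 ∈ W := by simpa using memP 0 (by omega)
  have mapLe : ∀ T : Module.End ℂ V, (∀ s ∈ S, T s ∈ W) → ∀ v ∈ W, T v ∈ W := by
    intro T hT v hv
    have h2 : Submodule.map T W ≤ W := by
      rw [hWdef, Submodule.map_span, Submodule.span_le]
      rintro _ ⟨s, hs, rfl⟩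
      exact hT s hs
    exact h2 ⟨v, hv, rfl⟩
  have inv0 : ∀ v ∈ W, ρ0 v ∈ W := by
    refine mapLe ρ0 ?_
    rintro s (⟨p, rfl⟩ | ⟨p, rfl⟩)
    · obtain ⟨y, hy⟩ := eigP (p:ℕ)
      rw [hy]; exact W.smul_mem y (memP _ p.2)
    · obtain ⟨y, hy⟩ := eigM (p:ℕ)
      rw [hy]; exact W.smul_mem y (memM _ p.2)
  have invC : ∀ v ∈ W, ρC v ∈ W := by
    intro v hv
    rw [hC]
    show c • (1 : Module.End ℂ V) v ∈ W
    exact W.smul_mem c hv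
  have invp : ∀ v ∈ W, ρp v ∈ W := by
    refine mapLe ρp ?_
    rintro s (⟨p, rfl⟩ | ⟨p, rfl⟩)
    · have e1 : ρp ((ρp^(p:ℕ)) v0) = (ρp^((p:ℕ)+1)) v0 := by rw [pow_succ']; rfl
      rw [e1]
      by_cases hpl : (p:ℕ)+1 < l
      · exact memP _ hpl
      · have hpe : (p:ℕ)+1 = l := by have := p.2; omega
        rw [hpe, hμ]
        show μ • (1 : Module.End ℂ V) v0 ∈ W
        exact W.smul_mem μ memv0
    · dsimp only
      by_cases h0 : (p:ℕ) = 0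
      · rw [h0]
        simpa using memP 1 (by omega)
      · obtain ⟨k, hk⟩ : ∃ k, (p:ℕ) = k + 1 := ⟨(p:ℕ)-1, by omega⟩
        have hkl : k < l := by have := p.2; omega
        obtain ⟨y, hy⟩ := eigM k
        have e1 : ρp ((ρm^(p:ℕ)) v0) = (ρp * ρm) ((ρm^k) v0) := by
          rw [hk, pow_succ']; rfl
        have e3 : ρ0 (ρ0 ((ρm^k) v0)) = (y*y) • ((ρm^k) v0) := by
          rw [hy, map_smul, hy, smul_smul]
        have e4 : (ρp * ρm) ((ρm^k) v0) = (κ - q^2*(y*y) + q*c*y) • ((ρm^k) v0) := by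
          rw [PM]
          simp only [LinearMap.sub_apply, LinearMap.add_apply, LinearMap.smul_apply,
            Module.End.one_apply, Module.End.mul_apply]
          rw [e3, hy, smul_smul, smul_smul]
          module
        rw [e1, e4]
        exact W.smul_mem _ (memM k hkl)
  have invm : ∀ v ∈ W, ρm v ∈ W := by
    refine mapLe ρm ?_
    rintro s (⟨p, rfl⟩ | ⟨p, rfl⟩)
    · dsimp only
      by_cases h0 : (p:ℕ) = 0
      · rw [h0]
        simpa using memM 1 (by omega)
      · obtain ⟨k, hk⟩ : ∃ k, (p:ℕ) = k + 1 := ⟨(p:ℕ)-1, by omega⟩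
        have hkl : k < l := by have := p.2; omega
        obtain ⟨y, hy⟩ := eigP k
        have e1 : ρm ((ρp^(p:ℕ)) v0) = (ρm * ρp) ((ρp^k) v0) := by
          rw [hk, pow_succ']; rfl
        have e3 : ρ0 (ρ0 ((ρp^k) v0)) = (y*y) • ((ρp^k) v0) := by
          rw [hy, map_smul, hy, smul_smul]
        have e4 : (ρm * ρp) ((ρp^k) v0) = (κ - q⁻¹^2*(y*y) - q⁻¹*c*y) • ((ρp^k) v0) := by
          rw [MP]
          simp only [LinearMap.sub_apply, LinearMap.add_apply, LinearMap.smul_apply,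
            Module.End.one_apply, Module.End.mul_apply]
          rw [e3, hy, smul_smul, smul_smul]
          module
        rw [e1, e4]
        exact W.smul_mem _ (memP k hkl)
    · have e1 : ρm ((ρm^(p:ℕ)) v0) = (ρm^((p:ℕ)+1)) v0 := by rw [pow_succ']; rfl
      rw [e1]
      by_cases hpl : (p:ℕ)+1 < l
      · exact memM _ hpl
      · have hpe : (p:ℕ)+1 = l := by have := p.2; omega
        rw [hpe, hν]
        show ν • (1 : Module.End ℂ V) v0 ∈ W
        exact W.smul_mem ν memv0
  rcases hirr W inv0 invp invm invC with hbot | htop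
  · exfalso
    rw [hbot, Submodule.mem_bot] at memv0
    exact hv0.2 memv0
  · exact htop

end SL2q
end
end

section
/- Assume q^{2l} = 1 where l ≥ 2 is the smallest positive integer with this property. Let c, x₀ ∈ ℂ with c − λx₀ ≠ 0. Then the l complex numbers q^{2p} x₀ − q^p [p] c, for p = 0, 1, …, l−1, are pairwise distinct. -/
noncomputable section

namespace SL2q

/-- The q-number [p] = (q^p − q^{−p})/(q − q⁻¹). -/
def qNum (q : ℂ) (p : ℕ) : ℂ := (q ^ p - q⁻¹ ^ p) / (q - q⁻¹)

/-- if l ≥ 2 is minimal with q^{2l} = 1 and c − λx₀ ≠ 0, the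
numbers q^{2p} x₀ − q^p [p] c, p = 0, …, l−1, are pairwise distinct. -/
theorem eigenvalues_distinct (q : ℂ) (hq : q ≠ 0) (hq2 : q ^ 2 ≠ 1)
    (l : ℕ) (hl : 2 ≤ l) (hq2l : q ^ (2 * l) = 1)
    (hmin : ∀ m : ℕ, 0 < m → m < l → q ^ (2 * m) ≠ 1)
    (c x0 : ℂ) (hz : c - (q - q⁻¹) * x0 ≠ 0) :
    ∀ p1 p2 : ℕ, p1 < l → p2 < l → p1 ≠ p2 →
      q ^ (2 * p1) * x0 - q ^ p1 * qNum q p1 * c ≠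
      q ^ (2 * p2) * x0 - q ^ p2 * qNum q p2 * c := by
  have hlam : q - q⁻¹ ≠ 0 := by
    intro h
    apply hq2
    have hqq : q = q⁻¹ := sub_eq_zero.mp h
    have : q ^ 2 = q * q⁻¹ := by rw [sq]; nth_rewrite 2 [hqq]; rfl
    rw [this, mul_inv_cancel₀ hq]
  -- key reformulation
  have key : ∀ p : ℕ, q ^ (2 * p) * x0 - q ^ p * qNum q p * c
      = q ^ (2 * p) * (x0 - c / (q - q⁻¹)) + c / (q - q⁻¹) := by
    intro p
    have h1 : q ^ p * (q ^ p - q⁻¹ ^ p) = q ^ (2 * p) - 1 := by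
      rw [mul_sub, inv_pow, mul_inv_cancel₀ (pow_ne_zero p hq), ← pow_add, two_mul]
    have h2 : q ^ p * qNum q p = (q ^ (2 * p) - 1) / (q - q⁻¹) := by
      rw [qNum, mul_div_assoc', h1]
    rw [h2]
    field_simp
    ring
  -- injectivity of p ↦ q^(2p) on [0, l)
  have inj : ∀ p1 p2 : ℕ, p1 < l → p2 < l → q ^ (2 * p1) = q ^ (2 * p2) → p1 = p2 := by
    have main : ∀ p1 p2 : ℕ, p1 ≤ p2 → p1 < l → p2 < l →
        q ^ (2 * p1) = q ^ (2 * p2) → p1 = p2 := by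
      intro p1 p2 hle h1 h2 heq
      by_contra hne
      have hd : 0 < p2 - p1 := Nat.sub_pos_of_lt (lt_of_le_of_ne hle hne)
      apply hmin (p2 - p1) hd (lt_of_le_of_lt (Nat.sub_le _ _) h2)
      have : q ^ (2 * p1) * q ^ (2 * (p2 - p1)) = q ^ (2 * p1) * 1 := by
        rw [← pow_add, mul_one, ← Nat.mul_add, Nat.add_sub_cancel' hle, heq]
      exact mul_left_cancel₀ (pow_ne_zero _ hq) this
    intro p1 p2 h1 h2 heq
    rcases le_total p1 p2 with h | h
    · exact main p1 p2 h h1 h2 heq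
    · exact (main p2 p1 h h2 h1 heq.symm).symm
  have hA : x0 - c / (q - q⁻¹) ≠ 0 := by
    intro h
    apply hz
    have : x0 = c / (q - q⁻¹) := sub_eq_zero.mp h
    rw [this, mul_div_cancel₀ _ hlam, sub_self]
  intro p1 p2 h1 h2 hne heq
  rw [key, key] at heq
  have : q ^ (2 * p1) = q ^ (2 * p2) :=
    mul_right_cancel₀ hA (by linear_combination heq)
  exact hne (inj p1 p2 h1 h2 this)

end SL2q
end
end

section
/- Assume q^{2l} = 1 where l ≥ 2 is the smallest positive integer with this property. Let c, x₀, c'₂ ∈ ℂ and x₋ ∈ ℂ with x₋ ≠ 0 and c − λx₀ ≠ 0; set d² := c² − λ²c'₂. Then the l-dimensional representation of B on ℂ^l defined by ρ_C v_p = c v_p, ρ₀ v_p = (q^{2p} x₀ − q^p [p] c) v_p, ρ₋ v_p = x₋ v_{p+1 mod l}, ρ₊ v_p = x₋⁻¹ λ⁻² ( −d² + (1+q⁻²) c (c−λx₀) q^{2p} − q⁻² (c−λx₀)² q^{4p} ) v_{p−1 mod l} is irreducible: the only subspaces of ℂ^l invariant under all four operators are 0 and ℂ^l. -/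
/-!
The representation is spanned by the vectors `v_p`, and `ρ₀` acts diagonally with eigenvalues
`μ_p` satisfying `λ μ_p = c - q^{2p} (c - λ x₀)`. Since `q²` has order exactly `l` and
`c - λ x₀ ≠ 0`, the `μ_p` are pairwise distinct, so an invariant subspace containing a nonzero
vector `v` with `v_p ≠ 0` contains `v_p` itself (apply `∏_{j ≠ p} (ρ₀ - μ_j)`). As `x₋ ≠ 0`,
`ρ₋` then moves `v_p` cyclically through all basis vectors.
-/

noncomputable section

open Function Matrix Fin.NatCast

section

variable {K ι : Type*} [DecidableEq ι]

theorem Submodule.prod_sub_mul_mem_of_mul_mem [CommRing K] {W : Submodule K (ι → K)}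
    {μ : ι → K} (hW : ∀ v ∈ W, μ * v ∈ W) {v : ι → K} (hv : v ∈ W) (s : Finset ι) :
    (fun i => (∏ j ∈ s, (μ i - μ j)) * v i) ∈ W := by
  induction s using Finset.induction_on with
  | empty => simpa using hv
  | insert j s hj ih =>
    convert W.sub_mem (hW _ ih) (W.smul_mem (μ j) ih) using 1
    funext i
    simp only [Finset.prod_insert hj, Pi.sub_apply, Pi.mul_apply, Pi.smul_apply, smul_eq_mul]
    ring

theorem Submodule.single_mem_of_mul_mem [Field K] [Fintype ι] {W : Submodule K (ι → K)}
    {μ : ι → K} (hμ : Injective μ) (hW : ∀ v ∈ W, μ * v ∈ W) {v : ι → K} (hv : v ∈ W)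
    {p : ι} (hp : v p ≠ 0) : Pi.single p 1 ∈ W := by
  set w : ι → K := fun i => (∏ j ∈ Finset.univ.erase p, (μ i - μ j)) * v i
  have hwW : w ∈ W := W.prod_sub_mul_mem_of_mul_mem hW hv _
  have hwp : w p ≠ 0 :=
    mul_ne_zero (Finset.prod_ne_zero_iff.2 fun j hj =>
      sub_ne_zero.2 (hμ.ne (Finset.ne_of_mem_erase hj).symm)) hp
  have hw0 : ∀ i ≠ p, w i = 0 := fun i hi =>
    mul_eq_zero_of_left (Finset.prod_eq_zero (f := fun j => μ i - μ j)
      (Finset.mem_erase.2 ⟨hi, Finset.mem_univ i⟩) (sub_self _)) _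
  have hw : w = w p • Pi.single p 1 := by
    funext i
    rcases eq_or_ne i p with rfl | hi
    · simp
    · simp [hi, hw0 i hi]
  rw [← inv_smul_smul₀ hwp (Pi.single p 1), ← hw]
  exact W.smul_mem _ hwW

theorem Submodule.eq_top_of_forall_single_mem [Semiring K] [Finite ι] {W : Submodule K (ι → K)}
    (h : ∀ i, Pi.single i 1 ∈ W) : W = ⊤ := by
  rw [eq_top_iff, ← (Pi.basisFun K ι).span_eq, Submodule.span_le]
  rintro _ ⟨i, rfl⟩
  simpa using h i

end

theorem Fin.forall_of_imp_add_one {l : ℕ} [NeZero l] {P : Fin l → Prop} {p : Fin l} (hp : P p)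
    (h : ∀ i, P i → P (i + 1)) (i : Fin l) : P i := by
  have hk : ∀ k : ℕ, P (p + k) := by
    intro k
    induction k with
    | zero => simpa using hp
    | succ k ih => simpa [add_assoc] using h _ ih
  simpa using hk (i - p : Fin l)

theorem Matrix.cyclicShift_mulVec_single {K : Type*} [Semiring K] {l : ℕ} [NeZero l] (a : K)
    (p : Fin l) :
    (Matrix.of fun i j : Fin l => if (i : ℕ) = ((j : ℕ) + 1) % l then a else 0) *ᵥ Pi.single p 1
      = a • Pi.single (p + 1) 1 := by
  funext i
  simp [Fin.ext_iff, Fin.val_add, Pi.single_apply]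

theorem sub_inv_ne_zero {K : Type*} [Field K] {q : K} (hq : q ≠ 0) (hq2 : q ^ 2 ≠ 1) :
    q - q⁻¹ ≠ 0 := by
  rw [show q - q⁻¹ = (q ^ 2 - 1) / q by field_simp]
  exact div_ne_zero (sub_ne_zero.2 hq2) hq

namespace SL2q

/-- The eigenvalue of `ρ₀` on `v_p`. -/
def weight (q x0 c : ℂ) (p : ℕ) : ℂ := q ^ (2 * p) * x0 - q ^ p * qNum q p * c

theorem sub_inv_mul_weight {q : ℂ} (hq : q ≠ 0) (hq2 : q ^ 2 ≠ 1) (x0 c : ℂ) (p : ℕ) :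
    (q - q⁻¹) * weight q x0 c p = c - (q ^ 2) ^ p * (c - (q - q⁻¹) * x0) := by
  have hlam := sub_inv_ne_zero hq hq2
  have hpow : q ^ p * q⁻¹ ^ p = 1 := by rw [← mul_pow, mul_inv_cancel₀ hq, one_pow]
  simp only [weight, qNum, ← pow_mul]
  field_simp
  linear_combination q * c * hpow

theorem weight_eq_weight_iff {q : ℂ} (hq : q ≠ 0) (hq2 : q ^ 2 ≠ 1) {x0 c : ℂ}
    (hz : c - (q - q⁻¹) * x0 ≠ 0) {m n : ℕ} :
    weight q x0 c m = weight q x0 c n ↔ (q ^ 2) ^ m = (q ^ 2) ^ n := by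
  rw [← (mul_right_injective₀ (sub_inv_ne_zero hq hq2)).eq_iff, sub_inv_mul_weight hq hq2,
    sub_inv_mul_weight hq hq2, sub_right_inj, mul_left_inj' hz]

/-- the explicit l-dimensional periodic representation with
x₋ ≠ 0 and c − λx₀ ≠ 0 (basis v₀,…,v_{l−1}, indices mod l) is irreducible. -/
theorem periodic_rep_irreducible (q : ℂ) (hq : q ≠ 0) (hq2 : q ^ 2 ≠ 1)
    (l : ℕ) (hl : 2 ≤ l) (hq2l : q ^ (2 * l) = 1)
    (hmin : ∀ m : ℕ, 0 < m → m < l → q ^ (2 * m) ≠ 1)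
    (c x0 c2 xm : ℂ) (hxm : xm ≠ 0) (hz : c - (q - q⁻¹) * x0 ≠ 0) :
    let d2 : ℂ := c ^ 2 - (q - q⁻¹) ^ 2 * c2
    let MC : Matrix (Fin l) (Fin l) ℂ := c • 1
    let M0 : Matrix (Fin l) (Fin l) ℂ :=
      Matrix.diagonal fun p => q ^ (2 * (p : ℕ)) * x0 - q ^ (p : ℕ) * qNum q (p : ℕ) * c
    let Mm : Matrix (Fin l) (Fin l) ℂ :=
      Matrix.of fun i j => if (i : ℕ) = ((j : ℕ) + 1) % l then xm else 0
    let Mp : Matrix (Fin l) (Fin l) ℂ :=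
      Matrix.of fun i j =>
        if ((i : ℕ) + 1) % l = (j : ℕ) then
          xm⁻¹ * ((q - q⁻¹) ^ 2)⁻¹ *
            (-d2 + (1 + q⁻¹ ^ 2) * c * (c - (q - q⁻¹) * x0) * q ^ (2 * (j : ℕ))
              - q⁻¹ ^ 2 * (c - (q - q⁻¹) * x0) ^ 2 * q ^ (4 * (j : ℕ)))
        else 0
    ∀ W : Submodule ℂ (Fin l → ℂ),
      (∀ v ∈ W, M0.mulVec v ∈ W) → (∀ v ∈ W, Mp.mulVec v ∈ W) →
      (∀ v ∈ W, Mm.mulVec v ∈ W) → (∀ v ∈ W, MC.mulVec v ∈ W) →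
      W = ⊥ ∨ W = ⊤ := by
  intro d2 MC M0 Mm Mp W hW0 _ hWm _
  have : NeZero l := ⟨by omega⟩
  have horder : orderOf (q ^ 2) = l := (orderOf_eq_iff (by omega)).2
    ⟨by rwa [← pow_mul], fun m hm hm0 => by rw [← pow_mul]; exact hmin m hm0 hm⟩
  have hμ : Injective fun p : Fin l => weight q x0 c p := fun a b hab =>
    Fin.ext (pow_injOn_Iio_orderOf (horder ▸ a.2) (horder ▸ b.2)
      ((weight_eq_weight_iff hq hq2 hz).1 hab))
  have hdiag : ∀ v ∈ W, (fun p : Fin l => weight q x0 c p) * v ∈ W := fun v hv => by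
    convert hW0 v hv using 1
    exact funext fun i => (mulVec_diagonal (fun p : Fin l => weight q x0 c p) v i).symm
  have hshift : ∀ i, Pi.single i 1 ∈ W → Pi.single (i + 1) 1 ∈ W := fun i hi => by
    simpa only [Mm, cyclicShift_mulVec_single, inv_smul_smul₀ hxm] using
      W.smul_mem xm⁻¹ (hWm _ hi)
  refine or_iff_not_imp_left.2 fun hne => ?_
  obtain ⟨v, hvW, hv0⟩ := W.exists_mem_ne_zero_of_ne_bot hne
  obtain ⟨p, hp⟩ := Function.ne_iff.1 hv0
  exact W.eq_top_of_forall_single_mem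
    (Fin.forall_of_imp_add_one (W.single_mem_of_mul_mem hμ hdiag hvW hp) hshift)

end SL2q
end
end

section
/- Assume q^{2l} = 1 where l ≥ 2 is the smallest positive integer with this property. Let (V; ρ₀, ρ₊, ρ₋, ρ_C) be a finite-dimensional irreducible representation of B over ℂ which additionally satisfies ρ_C² − λ²(ρ₋ρ₊ + q⁻¹ρ_Cρ₀ + q⁻²ρ₀²) = id (i.e. it is a representation of the quotient algebra F). Then there exist scalars c, ξ₊, ξ₋, z ∈ ℂ with ρ_C = c·id, ρ₊^l = ξ₊·id, ρ₋^l = ξ₋·id, (ρ_C − λρ₀)^l = z·id, and ξ₋·ξ₊ = q^{l(l−1)} λ^{−2l} ( −1 + q^{−l}·Q_l((q+q⁻¹)c)·z − z² ). -/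
/-!
Put `A := C - λX₀`. By Schur's lemma `C` acts as a scalar `c`, and `A` `q`-commutes with the
raising and lowering operators: `A X₊ = q⁻² X₊ A`, `A X₋ = q² X₋ A`. The Casimir relation of `F`
turns `λ²X₋X₊` and `λ²X₊X₋` into `P(A)` and `P(q²A)` for the quadratic `P = casimirPoly q⁻² c`.
Pushing `A` through `X₊ʲ` rescales it by `q⁻²ʲ`, so `q^{2l} = 1` makes `X₊ˡ` commute with `X₋`
(and `X₋ˡ` with `X₊`); Schur's lemma then makes `X₊ˡ`, `X₋ˡ`, `Aˡ` scalars. Finally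
`λ^{2l} X₋ˡX₊ˡ = ∏_{j<l} P(q⁻²ʲA)`, and as the roots of `P` are `q u^{±1}` with
`u + u⁻¹ = (q + q⁻¹)c`, the product over all `l`-th roots of unity collapses to
`(-1)ˡ (A^{2l} - qˡ(uˡ + u⁻ˡ) Aˡ + 1)`.
-/

noncomputable section

namespace SL2q

open Polynomial Finset

def IsIrreducible {K V : Type*} [Field K] [AddCommGroup V] [Module K V]
    (S : Set (Module.End K V)) : Prop :=
  ∀ W : Submodule K V, (∀ s ∈ S, ∀ v ∈ W, s v ∈ W) → W = ⊥ ∨ W = ⊤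

section Schur

variable {K V : Type*} [Field K] [AddCommGroup V] [Module K V]

theorem IsIrreducible.exists_eq_smul_one [IsAlgClosed K] [FiniteDimensional K V] [Nontrivial V]
    {S : Set (Module.End K V)} (hS : IsIrreducible S) {T : Module.End K V}
    (hT : ∀ s ∈ S, Commute T s) : ∃ μ : K, T = μ • 1 := by
  obtain ⟨μ, hμ⟩ := T.exists_eigenvalue
  have htop : T.eigenspace μ = ⊤ :=
    (hS _ fun s hs => T.mapsTo_genEigenspace_of_comm (hT s hs) μ 1).resolve_left hμ
  refine ⟨μ, LinearMap.ext fun v => ?_⟩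
  simpa using (T.mem_eigenspace_iff).1 (htop ▸ Submodule.mem_top : v ∈ T.eigenspace μ)

theorem isIrreducible_sub_smul {μ : K} (hμ : μ ≠ 0) {ρ0 ρp ρm ρC : Module.End K V}
    (hirr : ∀ W : Submodule K V, (∀ v ∈ W, ρ0 v ∈ W) → (∀ v ∈ W, ρp v ∈ W) →
      (∀ v ∈ W, ρm v ∈ W) → (∀ v ∈ W, ρC v ∈ W) → W = ⊥ ∨ W = ⊤) :
    IsIrreducible ({ρC - μ • ρ0, ρp, ρm, ρC} : Set (Module.End K V)) := by
  intro W hW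
  simp only [Set.mem_insert_iff, Set.mem_singleton_iff, forall_eq_or_imp, forall_eq] at hW
  obtain ⟨hA, hp, hm, hC⟩ := hW
  refine hirr W (fun v hv => ?_) hp hm hC
  have hρ0 : ρ0 v = μ⁻¹ • (ρC v - (ρC - μ • ρ0) v) := by
    simp [smul_smul, inv_mul_cancel₀ hμ]
  rw [hρ0]
  exact W.smul_mem _ (W.sub_mem (hC v hv) (hA v hv))

end Schur

section QCommute

variable {k R : Type*} [CommSemiring k] [Semiring R] [Algebra k R] {a x y : R} {t : k}

theorem pow_mul_eq_smul_mul_pow (h : a * x = t • (x * a)) (n : ℕ) :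
    a ^ n * x = t ^ n • (x * a ^ n) := by
  induction n with
  | zero => simp
  | succ n ih =>
    rw [pow_succ, mul_assoc, h, mul_smul_comm, ← mul_assoc, ih, smul_mul_assoc, smul_smul,
      mul_assoc, ← pow_succ, ← pow_succ']

theorem aeval_mul_eq_mul_aeval_comp (h : a * x = t • (x * a)) (f : k[X]) :
    aeval a f * x = x * aeval a (f.comp (C t * X)) := by
  induction f using Polynomial.induction_on' with
  | add f g hf hg => rw [map_add, add_mul, hf, hg, add_comp, map_add, mul_add]
  | monomial n r =>
    simp only [aeval_monomial, monomial_comp, map_mul, map_pow, aeval_C, aeval_X,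
      Algebra.algebraMap_eq_smul_one, smul_mul_assoc, one_mul, mul_pow, _root_.smul_pow, one_pow,
      smul_smul, mul_smul_comm, pow_mul_eq_smul_mul_pow h, mul_comm r]

theorem aeval_mul_pow_eq_mul_aeval_comp (h : a * x = t • (x * a)) (f : k[X]) (n : ℕ) :
    aeval a f * x ^ n = x ^ n * aeval a (f.comp (C (t ^ n) * X)) := by
  induction n generalizing f with
  | zero => simp
  | succ n ih =>
    rw [pow_succ, ← mul_assoc, ih, mul_assoc, aeval_mul_eq_mul_aeval_comp h, ← mul_assoc,
      comp_assoc]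
    simp [pow_succ, mul_assoc]

theorem commute_pow_left_of_pow_eq_one (h : a * x = t • (x * a)) {n : ℕ} (ht : t ^ n = 1) :
    Commute (a ^ n) x := by
  rw [Commute, SemiconjBy, pow_mul_eq_smul_mul_pow h, ht, one_smul]

theorem commute_pow_right_of_pow_eq_one (h : a * x = t • (x * a)) {n : ℕ} (ht : t ^ n = 1) :
    Commute a (x ^ n) := by
  rw [Commute, SemiconjBy]
  simpa [ht] using aeval_mul_pow_eq_mul_aeval_comp h X n

theorem pow_mul_pow_eq_aeval_prod (h : a * x = t • (x * a)) {P : k[X]}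
    (hyx : y * x = aeval a P) (n : ℕ) :
    y ^ n * x ^ n = aeval a (∏ j ∈ range n, P.comp (C (t ^ j) * X)) := by
  induction n with
  | zero => simp
  | succ n ih =>
    calc y ^ (n + 1) * x ^ (n + 1) = y ^ n * (y * x) * x ^ n := by
          rw [pow_succ, pow_succ', mul_assoc, mul_assoc, mul_assoc]
      _ = y ^ n * x ^ n * aeval a (P.comp (C (t ^ n) * X)) := by
          rw [hyx, mul_assoc, aeval_mul_pow_eq_mul_aeval_comp h, ← mul_assoc]
      _ = _ := by rw [ih, ← map_mul, prod_range_succ]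

end QCommute

section QCommuteField

variable {k R : Type*} [Field k] [Ring R] [Algebra k R] {a x y : R} {t : k}

theorem commute_pow_of_mul_eq_aeval (h : a * x = t • (x * a)) {P : k[X]}
    (hyx : y * x = aeval a P) (hxy : x * y = aeval a (P.comp (C t⁻¹ * X))) {n : ℕ}
    (ht : t ^ n = 1) : Commute (x ^ n) y := by
  cases n with
  | zero => exact pow_zero x ▸ Commute.one_left y
  | succ n =>
    have htn : t ^ n = t⁻¹ := eq_inv_of_mul_eq_one_left (by rwa [← pow_succ])
    calc x ^ (n + 1) * y = x ^ n * (x * y) := by rw [pow_succ, mul_assoc]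
      _ = y * x * x ^ n := by rw [hyx, aeval_mul_pow_eq_mul_aeval_comp h, htn, hxy]
      _ = y * x ^ (n + 1) := by rw [mul_assoc, pow_succ']

end QCommuteField

section RootsOfUnity

theorem prod_range_pow_mul_sub {R : Type*} [CommRing R] [IsDomain R] {ζ : R} {n : ℕ}
    (hζ : IsPrimitiveRoot ζ n) (hn : 0 < n) (y α : R) :
    ∏ j ∈ range n, (ζ ^ j * y - α) = (-1) ^ n * (α ^ n - y ^ n) := by
  have h := congrArg (eval α) (X_pow_sub_C_eq_prod hζ hn (rfl : y ^ n = y ^ n))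
  simp only [eval_sub, eval_pow, eval_X, eval_C, eval_prod] at h
  rw [h, show (-1 : R) ^ n = ∏ _j ∈ range n, (-1 : R) by simp, ← prod_mul_distrib]
  exact prod_congr rfl fun j _ => by ring

theorem pow_mul_sub_one_eq_neg_neg_one_pow {K : Type*} [CommRing K] [IsDomain K] {q : K} {n : ℕ}
    (hq : IsPrimitiveRoot (q ^ 2) n) (hn : 0 < n) : q ^ (n * (n - 1)) = -(-1) ^ n := by
  -- `q ^ (n * (n - 1))` is the product of all `n`-th roots of unity `(q ^ 2) ^ j`
  have h := prod_range_pow_mul_sub hq hn 1 0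
  simp only [mul_one, sub_zero, prod_pow_eq_pow_sum, ← pow_mul, zero_pow hn.ne', one_pow] at h
  rw [← sum_range_id_mul_two, mul_comm, mul_sum, h]
  ring

theorem eq_of_pow_mul_eq_neg_one_pow_mul {K : Type*} [Field K] {q d ξ σ z : K} {n : ℕ}
    (hq : IsPrimitiveRoot (q ^ 2) n) (hn : 0 < n) (hd : d ≠ 0)
    (h : d ^ n * ξ = (-1) ^ n * (z ^ 2 - q ^ n * σ * z + 1)) :
    ξ = q ^ (n * (n - 1)) * (d ^ n)⁻¹ * (-1 + q⁻¹ ^ n * σ * z - z ^ 2) := by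
  have hinv : q⁻¹ ^ n = q ^ n := by
    rw [inv_pow, inv_eq_of_mul_eq_one_left]
    rw [← pow_add, ← two_mul, pow_mul, hq.pow_eq_one]
  rw [pow_mul_sub_one_eq_neg_neg_one_pow hq hn, hinv]
  field_simp
  linear_combination h

end RootsOfUnity

section CasimirPoly

def casimirPoly {k : Type*} [CommRing k] (s c : k) : k[X] :=
  C ((1 + s) * c) * X - C s * X ^ 2 - 1

variable {k R : Type*} [Field k] [Ring R] [Algebra k R] {s t c α β d : k} {a x y : R}

theorem aeval_casimirPoly (s c : k) (a : R) :
    aeval a (casimirPoly s c) = ((1 + s) * c) • a - s • (a * a) - 1 := by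
  simp only [casimirPoly, map_sub, map_mul, aeval_C, aeval_X, map_one,
    Algebra.algebraMap_eq_smul_one, smul_mul_assoc, one_mul, sq]
  module

theorem casimirPoly_comp_C_mul_X (hst : s * t = 1) (c : k) :
    (casimirPoly s c).comp (C t * X) = casimirPoly t c := by
  simp only [casimirPoly, sub_comp, mul_comp, C_comp, X_comp, pow_comp, one_comp, mul_pow,
    ← C_pow, ← mul_assoc, ← C_mul]
  congr 4
  · linear_combination c * hst
  · linear_combination t * hst

theorem casimirPoly_eq_mul (hsum : s * (α + β) = (1 + s) * c) (hprod : s * (α * β) = 1) :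
    casimirPoly s c = C (-s) * ((X - C α) * (X - C β)) := by
  rw [casimirPoly, ← hsum, ← C_1, ← hprod]
  simp only [map_mul, map_add, map_neg]
  ring

theorem prod_casimirPoly_comp {n : ℕ} (hs : IsPrimitiveRoot s n) (hn : 0 < n)
    (hsum : s * (α + β) = (1 + s) * c) (hprod : s * (α * β) = 1) :
    ∏ j ∈ range n, (casimirPoly s c).comp (C (s ^ j) * X)
      = C ((-1) ^ n) * (X ^ (2 * n) - C (α ^ n + β ^ n) * X ^ n + 1) := by
  have hC := hs.map_of_injective (f := (C : k →+* k[X])) C_injective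
  have hαβ : C α ^ n * C β ^ n = 1 := by
    rw [← C_pow, ← C_pow, ← C_mul, ← mul_pow, ← one_mul ((α * β) ^ n), ← hs.pow_eq_one,
      ← mul_pow, hprod, one_pow, C_1]
  have hsign : (-C s) ^ n = (-1) ^ n := by rw [neg_pow, ← C_pow, hs.pow_eq_one, C_1, mul_one]
  have hsq : ((-1 : k[X]) ^ n) * (-1) ^ n = 1 := by rw [← mul_pow]; norm_num
  simp only [casimirPoly_eq_mul hsum hprod, mul_comp, C_comp, neg_comp, sub_comp, X_comp, map_pow,
    prod_mul_distrib, prod_const, card_range, prod_range_pow_mul_sub hC hn X, map_neg, map_one,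
    hsign, map_add]
  linear_combination ((-1) ^ n * (X ^ (2 * n) - (C α ^ n + C β ^ n) * X ^ n
    + C α ^ n * C β ^ n)) * hsq + (-1) ^ n * hαβ

theorem commute_pow_of_casimirPoly (hst : s * t = 1) (hd : d ≠ 0) (h : a * x = s • (x * a))
    (hyx : d • (y * x) = aeval a (casimirPoly s c))
    (hxy : d • (x * y) = aeval a (casimirPoly t c)) {n : ℕ} (hn : s ^ n = 1) :
    Commute (x ^ n) y := by
  obtain rfl := eq_inv_of_mul_eq_one_right hst
  rw [← Commute.smul_right_iff₀ hd]
  refine commute_pow_of_mul_eq_aeval h (by rwa [smul_mul_assoc]) ?_ hn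
  rwa [casimirPoly_comp_C_mul_X hst, mul_smul_comm]

theorem smul_pow_mul_pow_eq_of_casimirPoly {n : ℕ} (hs : IsPrimitiveRoot s n) (hn : 0 < n)
    (hsum : s * (α + β) = (1 + s) * c) (hprod : s * (α * β) = 1) (h : a * x = s • (x * a))
    (hyx : d • (y * x) = aeval a (casimirPoly s c)) :
    d ^ n • (y ^ n * x ^ n) = (-1) ^ n • (a ^ n * a ^ n - (α ^ n + β ^ n) • a ^ n + 1) := by
  have := pow_mul_pow_eq_aeval_prod h (y := d • y) (by rwa [smul_mul_assoc]) n
  rw [prod_casimirPoly_comp hs hn hsum hprod, _root_.smul_pow, smul_mul_assoc] at this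
  rw [this, ← pow_add, ← two_mul]
  simp only [map_mul, map_sub, map_add, map_one, aeval_C, aeval_X_pow,
    Algebra.algebraMap_eq_smul_one, add_mul, smul_mul_assoc, one_mul]
  module

end CasimirPoly

section Relations

variable {k R : Type*} [Field k] [Ring R] [Algebra k R] {q c : k} {ρ0 ρp ρm ρC : R}

theorem mul_raise_eq (hq : q ≠ 0) (h1 : q ^ 2 • (ρ0 * ρp) - ρp * ρ0 = q • (ρC * ρp))
    (hcp : Commute ρC ρp) :
    (ρC - (q - q⁻¹) • ρ0) * ρp = q⁻¹ ^ 2 • (ρp * (ρC - (q - q⁻¹) • ρ0)) := by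
  simp only [sub_mul, mul_sub, smul_mul_assoc, mul_smul_comm, smul_sub, smul_smul]
  rw [hcp.eq] at h1 ⊢
  linear_combination (norm := skip) (-(q⁻¹ ^ 2 * (q - q⁻¹))) • h1
  match_scalars <;> field_simp <;> ring

theorem mul_lower_eq (hq : q ≠ 0)
    (h2 : q⁻¹ ^ 2 • (ρ0 * ρm) - ρm * ρ0 = -(q⁻¹ • (ρC * ρm))) (hcm : Commute ρC ρm) :
    (ρC - (q - q⁻¹) • ρ0) * ρm = q ^ 2 • (ρm * (ρC - (q - q⁻¹) • ρ0)) := by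
  simp only [sub_mul, mul_sub, smul_mul_assoc, mul_smul_comm, smul_sub, smul_smul]
  rw [hcm.eq] at h2 ⊢
  linear_combination (norm := skip) (-(q ^ 2 * (q - q⁻¹))) • h2
  match_scalars <;> field_simp <;> ring

theorem smul_lower_mul_raise_eq_aeval (hq : q ≠ 0) (hC : ρC = c • 1)
    (hF : ρC * ρC - (q - q⁻¹) ^ 2 • (ρm * ρp + q⁻¹ • (ρC * ρ0) + q⁻¹ ^ 2 • (ρ0 * ρ0)) = 1) :
    (q - q⁻¹) ^ 2 • (ρm * ρp) = aeval (ρC - (q - q⁻¹) • ρ0) (casimirPoly (q⁻¹ ^ 2) c) := by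
  subst hC
  simp only [aeval_casimirPoly, sub_mul, mul_sub, smul_mul_assoc, mul_smul_comm, one_mul,
    mul_one, smul_smul, smul_sub, smul_add] at hF ⊢
  linear_combination (norm := skip) -hF
  match_scalars <;> field_simp <;> ring

theorem smul_raise_mul_lower_eq_aeval (hq : q ≠ 0) (hC : ρC = c • 1)
    (h3 : ρp * ρm - ρm * ρp = (q + q⁻¹) • ((ρC - (q - q⁻¹) • ρ0) * ρ0))
    (hF : ρC * ρC - (q - q⁻¹) ^ 2 • (ρm * ρp + q⁻¹ • (ρC * ρ0) + q⁻¹ ^ 2 • (ρ0 * ρ0)) = 1) :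
    (q - q⁻¹) ^ 2 • (ρp * ρm) = aeval (ρC - (q - q⁻¹) • ρ0) (casimirPoly (q ^ 2) c) := by
  subst hC
  simp only [aeval_casimirPoly, sub_mul, mul_sub, smul_mul_assoc, mul_smul_comm, one_mul,
    mul_one, smul_smul, smul_sub, smul_add] at h3 hF ⊢
  linear_combination (norm := skip) -hF + (q - q⁻¹) ^ 2 • h3
  match_scalars <;> field_simp <;> ring

end Relations

theorem exists_add_inv_eq {K : Type*} [Field K] [IsAlgClosed K] (b : K) :
    ∃ u : K, u ≠ 0 ∧ u + u⁻¹ = b := by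
  obtain ⟨u, hu⟩ := IsAlgClosed.exists_root (C 1 * X ^ 2 + C (-b) * X + C 1)
    (by rw [degree_quadratic one_ne_zero]; decide)
  simp only [IsRoot, eval_add, eval_mul, eval_C, eval_pow, eval_X] at hu
  have hu0 : u ≠ 0 := by rintro rfl; simp at hu
  exact ⟨u, hu0, by field_simp; linear_combination hu⟩

theorem pow_mul_eq_of_pow_eq_smul_one {k R : Type*} [Field k] [IsAlgClosed k] [Ring R]
    [Nontrivial R] [Algebra k R] {q c d ξp ξm z : k} {a x y : R} {l : ℕ} {Q : k[X]}
    (hq : q ≠ 0) (hζ : IsPrimitiveRoot (q⁻¹ ^ 2) l) (hl : 0 < l)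
    (hQ : ∀ u : k, u ≠ 0 → Q.eval (u + u⁻¹) = u ^ l + u⁻¹ ^ l)
    (h : a * x = q⁻¹ ^ 2 • (x * a)) (hyx : d • (y * x) = aeval a (casimirPoly (q⁻¹ ^ 2) c))
    (hx : x ^ l = ξp • 1) (hy : y ^ l = ξm • 1) (ha : a ^ l = z • 1) :
    d ^ l * (ξm * ξp) = (-1) ^ l * (z ^ 2 - q ^ l * Q.eval ((q + q⁻¹) * c) * z + 1) := by
  obtain ⟨u, hu0, hu⟩ := exists_add_inv_eq ((q + q⁻¹) * c)
  -- the roots of `casimirPoly q⁻² c` are `q * u` and `q * u⁻¹`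
  have key := smul_pow_mul_pow_eq_of_casimirPoly hζ hl (α := q * u) (β := q * u⁻¹)
    (by rw [show q⁻¹ ^ 2 * (q * u + q * u⁻¹) = q⁻¹ * (u + u⁻¹) by field_simp, hu]; field_simp)
    (by field_simp) h hyx
  have hσ : (q * u) ^ l + (q * u⁻¹) ^ l = q ^ l * Q.eval ((q + q⁻¹) * c) := by
    rw [← hu, hQ u hu0]
    ring
  rw [hx, hy, ha, hσ] at key
  apply smul_left_injective k (one_ne_zero : (1 : R) ≠ 0)
  simp only [smul_mul_smul_comm, mul_one] at key ⊢
  linear_combination (norm := module) key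

theorem central_scalars_F_general (q : ℂ) (hq : q ≠ 0) (hq2 : q ^ 2 ≠ 1)
    (l : ℕ) (hl : 2 ≤ l) (hq2l : q ^ (2 * l) = 1)
    (hmin : ∀ m : ℕ, 0 < m → m < l → q ^ (2 * m) ≠ 1)
    (Q : Polynomial ℂ)
    (hQ : ∀ x : ℂ, x ≠ 0 → Q.eval (x + x⁻¹) = x ^ l + (x⁻¹) ^ l)
    (V : Type) [AddCommGroup V] [Module ℂ V] [FiniteDimensional ℂ V]
    (ρ0 ρp ρm ρC : Module.End ℂ V)
    (h1 : (q ^ 2 : ℂ) • (ρ0 * ρp) - ρp * ρ0 = q • (ρC * ρp))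
    (h2 : (q⁻¹ ^ 2 : ℂ) • (ρ0 * ρm) - ρm * ρ0 = -(q⁻¹ • (ρC * ρm)))
    (h3 : ρp * ρm - ρm * ρp = ((q + q⁻¹) : ℂ) • ((ρC - (q - q⁻¹) • ρ0) * ρ0))
    (hc0 : Commute ρC ρ0) (hcp : Commute ρC ρp) (hcm : Commute ρC ρm)
    (hF : ρC * ρC - ((q - q⁻¹) ^ 2 : ℂ) •
        (ρm * ρp + q⁻¹ • (ρC * ρ0) + (q⁻¹ ^ 2 : ℂ) • (ρ0 * ρ0))
        = (1 : Module.End ℂ V))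
    (hnt : Nontrivial V)
    (hirr : ∀ W : Submodule ℂ V,
      (∀ v ∈ W, ρ0 v ∈ W) → (∀ v ∈ W, ρp v ∈ W) →
      (∀ v ∈ W, ρm v ∈ W) → (∀ v ∈ W, ρC v ∈ W) → W = ⊥ ∨ W = ⊤) :
    ∃ c ξp ξm z : ℂ,
      ρC = c • (1 : Module.End ℂ V) ∧
      ρp ^ l = ξp • (1 : Module.End ℂ V) ∧
      ρm ^ l = ξm • (1 : Module.End ℂ V) ∧
      (ρC - (q - q⁻¹) • ρ0) ^ l = z • (1 : Module.End ℂ V) ∧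
      ξm * ξp =
        q ^ (l * (l - 1)) * ((q - q⁻¹) ^ (2 * l))⁻¹ *
          (-1 + q⁻¹ ^ l * Q.eval ((q + q⁻¹) * c) * z - z ^ 2) := by
  have hlam : q - q⁻¹ ≠ 0 := fun h => hq2 (by field_simp at h; linear_combination h)
  have hζ : IsPrimitiveRoot (q ^ 2) l := .mk_of_lt _ (by omega) (by rwa [← pow_mul])
    fun m hm hml => by rw [← pow_mul]; exact hmin m hm hml
  have hζ' : IsPrimitiveRoot (q⁻¹ ^ 2) l := inv_pow q 2 ▸ hζ.inv
  have hqq : q⁻¹ ^ 2 * q ^ 2 = 1 := by rw [← mul_pow, inv_mul_cancel₀ hq, one_pow]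
  have hd : (q - q⁻¹) ^ 2 ≠ 0 := pow_ne_zero 2 hlam
  set A := ρC - (q - q⁻¹) • ρ0
  have hS : IsIrreducible ({A, ρp, ρm, ρC} : Set _) := isIrreducible_sub_smul hlam hirr
  have hAp : A * ρp = q⁻¹ ^ 2 • (ρp * A) := mul_raise_eq hq h1 hcp
  have hAm : A * ρm = q ^ 2 • (ρm * A) := mul_lower_eq hq h2 hcm
  have hCA : Commute ρC A := (Commute.refl ρC).sub_right (hc0.smul_right _)
  obtain ⟨c, hc⟩ := hS.exists_eq_smul_one (T := ρC) (by simp [hCA, hcp, hcm])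
  have hmp := smul_lower_mul_raise_eq_aeval hq hc hF
  have hpm := smul_raise_mul_lower_eq_aeval hq hc h3 hF
  obtain ⟨ξp, hξp⟩ := hS.exists_eq_smul_one (T := ρp ^ l) (by
    simp [(commute_pow_right_of_pow_eq_one hAp hζ'.pow_eq_one).symm, (hcp.pow_right l).symm,
      commute_pow_of_casimirPoly hqq hd hAp hmp hpm hζ'.pow_eq_one])
  obtain ⟨ξm, hξm⟩ := hS.exists_eq_smul_one (T := ρm ^ l) (by
    simp [(commute_pow_right_of_pow_eq_one hAm hζ.pow_eq_one).symm, (hcm.pow_right l).symm,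
      commute_pow_of_casimirPoly (mul_comm (q⁻¹ ^ 2) (q ^ 2) ▸ hqq) hd hAm hpm hmp hζ.pow_eq_one])
  obtain ⟨z, hz⟩ := hS.exists_eq_smul_one (T := A ^ l) (by
    simp [commute_pow_left_of_pow_eq_one hAp hζ'.pow_eq_one,
      commute_pow_left_of_pow_eq_one hAm hζ.pow_eq_one, (hCA.pow_right l).symm])
  refine ⟨c, ξp, ξm, z, hc, hξp, hξm, hz, ?_⟩
  rw [pow_mul (q - q⁻¹)]
  exact eq_of_pow_mul_eq_neg_one_pow_mul hζ (by omega) hd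
    (pow_mul_eq_of_pow_eq_smul_one hq hζ' (by omega) hQ hAp hmp hξp hξm hz)

/-- on a finite-dimensional irreducible representation of B
satisfying the relation of the quotient algebra F, i.e.
ρ_C² − λ²(ρ₋ρ₊ + q⁻¹ρ_Cρ₀ + q⁻²ρ₀²) = id, the scalars c, ξ₊, ξ₋, z by which
C, X₊^l, X₋^l, (C−λX₀)^l act satisfy
ξ₋ξ₊ = q^{l(l−1)} λ^{−2l} ( −1 + q^{−l} Q_l((q+q⁻¹)c) z − z² ), where Q_l is
the unique polynomial with Q_l(x+x⁻¹) = x^l + x^{−l}. -/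
theorem central_scalars_F (q : ℂ) (hq : q ≠ 0) (hq2 : q ^ 2 ≠ 1)
    (l : ℕ) (hl : 2 ≤ l) (hq2l : q ^ (2 * l) = 1)
    (hmin : ∀ m : ℕ, 0 < m → m < l → q ^ (2 * m) ≠ 1)
    (Q : Polynomial ℂ) (hQdeg : Q.natDegree = l)
    (hQ : ∀ x : ℂ, x ≠ 0 → Q.eval (x + x⁻¹) = x ^ l + (x⁻¹) ^ l)
    (V : Type) [AddCommGroup V] [Module ℂ V] [FiniteDimensional ℂ V]
    (ρ0 ρp ρm ρC : Module.End ℂ V)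
    (h1 : (q ^ 2 : ℂ) • (ρ0 * ρp) - ρp * ρ0 = q • (ρC * ρp))
    (h2 : (q⁻¹ ^ 2 : ℂ) • (ρ0 * ρm) - ρm * ρ0 = -(q⁻¹ • (ρC * ρm)))
    (h3 : ρp * ρm - ρm * ρp = ((q + q⁻¹) : ℂ) • ((ρC - (q - q⁻¹) • ρ0) * ρ0))
    (hc0 : Commute ρC ρ0) (hcp : Commute ρC ρp) (hcm : Commute ρC ρm)
    (hF : ρC * ρC - ((q - q⁻¹) ^ 2 : ℂ) •
        (ρm * ρp + q⁻¹ • (ρC * ρ0) + (q⁻¹ ^ 2 : ℂ) • (ρ0 * ρ0))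
        = (1 : Module.End ℂ V))
    (hnt : Nontrivial V)
    (hirr : ∀ W : Submodule ℂ V,
      (∀ v ∈ W, ρ0 v ∈ W) → (∀ v ∈ W, ρp v ∈ W) →
      (∀ v ∈ W, ρm v ∈ W) → (∀ v ∈ W, ρC v ∈ W) → W = ⊥ ∨ W = ⊤) :
    ∃ c ξp ξm z : ℂ,
      ρC = c • (1 : Module.End ℂ V) ∧
      ρp ^ l = ξp • (1 : Module.End ℂ V) ∧
      ρm ^ l = ξm • (1 : Module.End ℂ V) ∧
      (ρC - (q - q⁻¹) • ρ0) ^ l = z • (1 : Module.End ℂ V) ∧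
      ξm * ξp =
        q ^ (l * (l - 1)) * ((q - q⁻¹) ^ (2 * l))⁻¹ *
          (-1 + q⁻¹ ^ l * Q.eval ((q + q⁻¹) * c) * z - z ^ 2) :=
  central_scalars_F_general q hq hq2 l hl hq2l hmin Q hQ V ρ0 ρp ρm ρC h1 h2 h3 hc0 hcp hcm hF hnt
    hirr

end SL2q
end
end
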